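/- arXiv:1907.05138 — 4 statements merged into one kernel-verified Lean document; each statement's English description precedes it below -/
import Mathlib

section
/- Consider the random directed multigraph model on N nodes with offspring PGF μ, and for 1 ≤ k ≤ N let q_k be the probability that the out-component of node 0 has exactly k nodes. For every M with 1 ≤ M ≤ N: [μ((M-1)/(N-1))]^M = ∑_{k=1}^{M} q_k · [μ((M-1)/(N-1))]^{M-k} · ( C(M-1,k-1) / C(N-1,k-1) ), where C(n,r) denotes the binomial coefficient. -/
open scoped Classical

/-- The weight (probability) of a realization `g` of the random directed multigraph on
`N` nodes: independently for each node `u`, its out-degree `ℓ` is drawn from the pmf `p`,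
and then `ℓ` out-neighbors are drawn independently uniformly from the `N - 1` nodes
other than `u` (with replacement). -/
noncomputable def graphWeight (N : ℕ) (p : ℕ → ℝ) (g : Fin N → List (Fin N)) : ℝ :=
  ∏ u : Fin N,
    if ∀ v ∈ g u, v ≠ u then
      p (g u).length * (1 / ((N : ℝ) - 1)) ^ (g u).length
    else 0

/-- Probability of an event in the random directed multigraph model. -/
noncomputable def graphProb (N : ℕ) (p : ℕ → ℝ) (E : Set (Fin N → List (Fin N))) : ℝ :=
  ∑' g : Fin N → List (Fin N), Set.indicator E (graphWeight N p) g

/-- The out-component of node `0`: the set of nodes reachable from node `0`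
(including node `0` itself) following directed edges. -/
def outComp (N : ℕ) (hN : 0 < N) (g : Fin N → List (Fin N)) : Set (Fin N) :=
  {v | Relation.ReflTransGen (fun a b => b ∈ g a) ⟨0, hN⟩ v}

/-- `qProb N hN p k` is the probability that the out-component of node `0` has exactly
`k` nodes. -/
noncomputable def qProb (N : ℕ) (hN : 0 < N) (p : ℕ → ℝ) (k : ℕ) : ℝ :=
  graphProb N p {g | (outComp N hN g).ncard = k}

/-!
Fix a set `A ∋ 0` of `M` nodes and put `θ = μ((M-1)/(N-1))`, the probability that a given node of
`A` sends all its edges into `A`; so `θ ^ M` is the probability that `A` is closed. `A` is closed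
iff the out-component `C` of `0` lies in `A` and every node of `A \ C` sends its edges into `A`.
The event `outComp = C` only depends on the out-lists of the nodes of `C`, hence is independent of
the second condition, whose probability is `θ ^ (M - |C|)`. By relabelling nodes,
`P(outComp = C) = q_k / C(N-1, k-1)` for each of the `C(M-1, k-1)` sets `C ⊆ A` of size `k`
containing `0`. Probabilities are computed in `ℝ≥0∞`, where all sums over graphs exist.
-/

open ENNReal Set
open scoped Finset

namespace ENNReal

variable {ι α β κ γ : Type*}

theorem tsum_pi_prod [Fintype ι] (f : ι → α → ℝ≥0∞) :
    ∑' g : ι → α, ∏ i, f i (g i) = ∏ i, ∑' a, f i a := by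
  revert f
  refine Fintype.induction_empty_option
    (P := fun ι _ => ∀ f : ι → α → ℝ≥0∞, ∑' g : ι → α, ∏ i, f i (g i) = ∏ i, ∑' a, f i a)
    ?_ ?_ ?_ ι
  · intro ι κ _ e ih f
    let := Fintype.ofEquiv κ e.symm
    rw [← Equiv.tsum_eq (e.arrowCongr (Equiv.refl α)),
      ← Fintype.prod_equiv e (fun i => ∑' a, f (e i) a) (fun k => ∑' a, f k a) fun _ => rfl, ← ih]
    exact tsum_congr fun g => (Fintype.prod_equiv e _ _ fun i => by simp).symm
  · simp
  · intro ι _ ih f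
    rw [← Equiv.tsum_eq (Equiv.piOptionEquivProd (β := fun _ => α)).symm, ENNReal.tsum_prod',
      Fintype.prod_option, ← ih, ← ENNReal.tsum_mul_right]
    refine tsum_congr fun a => ?_
    rw [← ENNReal.tsum_mul_left]
    exact tsum_congr fun g => by simp [Fintype.prod_option]

theorem tsum_indicator_univ_pi [Fintype ι] (w : ι → α → ℝ≥0∞) (T : ι → Set α) :
    ∑' g, (univ.pi T).indicator (fun g => ∏ i, w i (g i)) g
      = ∏ i, ∑' a, (T i).indicator (w i) a := by
  rw [← tsum_pi_prod]
  refine tsum_congr fun g => ?_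
  simp only [indicator_apply, mem_univ_pi, Finset.prod_ite_zero, Finset.mem_univ, forall_const]

theorem prod_piEquivPiSubtypeProd_symm [Fintype ι] (s : Set ι) (w : ι → α → ℝ≥0∞)
    (x : {i // i ∈ s} → α) (y : {i // i ∉ s} → α) :
    ∏ i, w i ((Equiv.piEquivPiSubtypeProd (· ∈ s) fun _ => α).symm (x, y) i)
      = (∏ i : {i // i ∈ s}, w i (x i)) * ∏ i : {i // i ∉ s}, w i (y i) := by
  rw [← Fintype.prod_subtype_mul_prod_subtype (· ∈ s)]
  simp only [Equiv.piEquivPiSubtypeProd_symm_apply, Subtype.coe_prop, dite_true]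
  exact congrArg _ (Fintype.prod_congr _ _ fun i => by simp [i.2])

theorem tsum_indicator_inter_of_dependsOn [Fintype ι] (w : ι → α → ℝ≥0∞)
    (hw : ∀ i, ∑' a, w i a = 1) (s : Set ι) {E F : Set (ι → α)}
    (hE : DependsOn (· ∈ E) s) (hF : DependsOn (· ∈ F) sᶜ) :
    ∑' g, (E ∩ F).indicator (fun g => ∏ i, w i (g i)) g
      = (∑' g, E.indicator (fun g => ∏ i, w i (g i)) g)
        * ∑' g, F.indicator (fun g => ∏ i, w i (g i)) g := by
  set W : (ι → α) → ℝ≥0∞ := fun g => ∏ i, w i (g i)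
  let e := (Equiv.piEquivPiSubtypeProd (· ∈ s) fun _ => α).symm
  let W₁ : ({i // i ∈ s} → α) → ℝ≥0∞ := fun x => ∏ i : {i // i ∈ s}, w i (x i)
  let W₂ : ({i // i ∉ s} → α) → ℝ≥0∞ := fun y => ∏ i : {i // i ∉ s}, w i (y i)
  -- `E` is the cylinder over `E₁` and `F` over `F₂`; the existentials avoid fixing base points.
  let E₁ : Set ({i // i ∈ s} → α) := {x | ∃ y, e (x, y) ∈ E}
  let F₂ : Set ({i // i ∉ s} → α) := {y | ∃ x, e (x, y) ∈ F}
  have hW : ∀ x y, W (e (x, y)) = W₁ x * W₂ y := prod_piEquivPiSubtypeProd_symm s w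
  have hE₁ : ∀ x y, e (x, y) ∈ E ↔ x ∈ E₁ := fun x y => by
    refine ⟨fun h => ⟨y, h⟩, fun ⟨y', h⟩ => ?_⟩
    rwa [show (e (x, y) ∈ E) = (e (x, y') ∈ E) from hE fun i hi => by simp [e, hi]]
  have hF₂ : ∀ x y, e (x, y) ∈ F ↔ y ∈ F₂ := fun x y => by
    refine ⟨fun h => ⟨x, h⟩, fun ⟨x', h⟩ => ?_⟩
    rwa [show (e (x, y) ∈ F) = (e (x', y) ∈ F) from hF fun i hi => by simp [e, show i ∉ s from hi]]
  have hW₁ : ∑' x, W₁ x = 1 := by simp only [W₁, tsum_pi_prod, hw, Finset.prod_const_one]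
  have hW₂ : ∑' y, W₂ y = 1 := by simp only [W₂, tsum_pi_prod, hw, Finset.prod_const_one]
  have split : ∀ G : Set (ι → α),
      ∑' g, G.indicator W g = ∑' x, ∑' y, G.indicator W (e (x, y)) := fun G => by
    rw [← Equiv.tsum_eq e, ENNReal.tsum_prod']
  have hEF : ∀ x y, (E ∩ F).indicator W (e (x, y)) = E₁.indicator W₁ x * F₂.indicator W₂ y :=
    fun x y => by
      simp only [indicator_apply, mem_inter_iff, hE₁, hF₂, hW]
      split_ifs <;> simp_all
  have hE' : ∀ x y, E.indicator W (e (x, y)) = E₁.indicator W₁ x * W₂ y := fun x y => by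
    simp only [indicator_apply, hE₁, hW]
    split_ifs <;> simp
  have hF' : ∀ x y, F.indicator W (e (x, y)) = W₁ x * F₂.indicator W₂ y := fun x y => by
    simp only [indicator_apply, hF₂, hW]
    split_ifs <;> simp
  simp only [split, hEF, hE', hF', ENNReal.tsum_mul_left, ENNReal.tsum_mul_right, hW₁, hW₂,
    mul_one, one_mul]

theorem tsum_indicator_eq_sum_inter (f : β → ℝ≥0∞) {E : Set β} (s : Finset κ) (F : κ → Set β)
    (hF : (s : Set κ).PairwiseDisjoint F) (hE : E ⊆ ⋃ c ∈ s, F c) :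
    ∑' b, E.indicator f b = ∑ c ∈ s, ∑' b, (E ∩ F c).indicator f b := by
  have hE' : E = ⋃ c ∈ s, E ∩ F c := by rw [← inter_iUnion₂, inter_eq_left.mpr hE]
  rw [← Summable.tsum_finsetSum fun _ _ => ENNReal.summable]
  conv_lhs => rw [hE']
  exact tsum_congr fun b =>
    Finset.indicator_biUnion_apply s _ (hF.mono fun _ => inter_subset_right) b

theorem tsum_indicator_forall_mem_list (S : Finset γ) (f : ℕ → ℝ≥0∞) (c : ℝ≥0∞) :
    ∑' l : List γ, {l | ∀ v ∈ l, v ∈ S}.indicator (fun l => f l.length * c ^ l.length) l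
      = ∑' n, f n * (#S * c) ^ n := by
  rw [← Equiv.tsum_eq List.equivSigmaTuple.symm, ENNReal.tsum_sigma']
  refine tsum_congr fun n => ?_
  have hterm : ∀ v : Fin n → γ,
      {l | ∀ v ∈ l, v ∈ S}.indicator (fun l => f l.length * c ^ l.length)
        (List.equivSigmaTuple.symm ⟨n, v⟩)
      = f n * (univ.pi fun _ => (S : Set γ)).indicator (fun v => ∏ _ : Fin n, c) v := by
    intro v
    simp [indicator_apply]
  rw [tsum_congr hterm, ENNReal.tsum_mul_left, tsum_indicator_univ_pi (fun _ _ => c),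
    ← tsum_subtype]
  simp

end ENNReal

theorem Finset.card_powerset_filter_mem_card_eq {γ : Type*} [DecidableEq γ] {A : Finset γ}
    {a : γ} (ha : a ∈ A) {k : ℕ} (hk : 1 ≤ k) :
    #{C ∈ A.powerset | a ∈ C ∧ #C = k} = (#A - 1).choose (k - 1) := by
  rw [← card_erase_of_mem ha, ← card_powersetCard]
  refine card_nbij' (erase · a) (insert a) ?_ ?_ ?_ ?_
  · intro C hC
    simp only [mem_coe, mem_filter, mem_powerset] at hC
    simp [mem_powersetCard, erase_subset_erase a hC.1, card_erase_of_mem hC.2.1, hC.2.2]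
  · intro D hD
    simp only [mem_coe, mem_powersetCard] at hD
    have haD : a ∉ D := fun h => by simpa using hD.1 h
    simp [insert_subset ha (hD.1.trans (erase_subset a A)), card_insert_of_notMem haD, hD.2]
    omega
  · intro C hC
    simp only [mem_coe, mem_filter, mem_powerset] at hC
    exact insert_erase hC.2.1
  · intro D hD
    simp only [mem_coe, mem_powersetCard] at hD
    exact erase_insert fun h => by simpa using hD.1 h

theorem Equiv.Perm.exists_apply_eq_self_map_eq {γ : Type*} [Fintype γ] [DecidableEq γ] {a : γ}
    {C C' : Finset γ} (ha : a ∈ C) (ha' : a ∈ C') (h : #C = #C') :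
    ∃ π : Equiv.Perm γ, π a = a ∧ C.map π.toEmbedding = C' := by
  let e₀ := Finset.equivOfCardEq h
  let e := e₀.trans (Equiv.swap (e₀ ⟨a, ha⟩) ⟨a, ha'⟩)
  refine ⟨Equiv.extendSubtype e, ?_, ?_⟩
  · rw [Equiv.extendSubtype_apply_of_mem e a ha]
    simp [e]
  · refine Finset.eq_of_subset_of_card_le (fun x hx => ?_) (by simp [h])
    obtain ⟨y, hy, rfl⟩ := Finset.mem_map.mp hx
    exact Equiv.extendSubtype_mem e y hy

namespace RandomDigraph

variable {N : ℕ} {p : ℕ → ℝ}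

noncomputable def nodeWeight (N : ℕ) (p : ℕ → ℝ) (u : Fin N) : List (Fin N) → ℝ≥0∞ :=
  {l | ∀ v ∈ l, v ≠ u}.indicator
    fun l => ENNReal.ofReal (p l.length) * ((N - 1 : ℕ) : ℝ≥0∞)⁻¹ ^ l.length

noncomputable def weight (N : ℕ) (p : ℕ → ℝ) (g : Fin N → List (Fin N)) : ℝ≥0∞ :=
  ∏ u, nodeWeight N p u (g u)

noncomputable def prob (N : ℕ) (p : ℕ → ℝ) (E : Set (Fin N → List (Fin N))) : ℝ≥0∞ :=
  ∑' g, E.indicator (weight N p) g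

noncomputable def pgf (p : ℕ → ℝ) (x : ℝ≥0∞) : ℝ≥0∞ :=
  ∑' n, ENNReal.ofReal (p n) * x ^ n

theorem graphWeight_eq_toReal_weight (hN : 2 ≤ N) (hp0 : ∀ ℓ, 0 ≤ p ℓ)
    (g : Fin N → List (Fin N)) : graphWeight N p g = (weight N p g).toReal := by
  have hN1 : ((N - 1 : ℕ) : ℝ) = (N : ℝ) - 1 := by rw [Nat.cast_sub (by omega), Nat.cast_one]
  rw [graphWeight, weight, ENNReal.toReal_prod]
  refine Fintype.prod_congr _ _ fun u => ?_
  simp only [nodeWeight, indicator_apply, mem_ofPred_eq]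
  split_ifs
  · rw [ENNReal.toReal_mul, ENNReal.toReal_ofReal (hp0 _), ENNReal.toReal_pow,
      ENNReal.toReal_inv, ENNReal.toReal_natCast, hN1, one_div]
  · rfl

theorem weight_ne_top (hN : 2 ≤ N) (g : Fin N → List (Fin N)) : weight N p g ≠ ⊤ := by
  refine ENNReal.prod_ne_top fun u _ => ?_
  simp only [nodeWeight, indicator_apply]
  split_ifs
  · exact ENNReal.mul_ne_top ENNReal.ofReal_ne_top
      (ENNReal.pow_ne_top (ENNReal.inv_ne_top.mpr (by norm_cast; omega)))
  · exact ENNReal.zero_ne_top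

theorem graphProb_eq_toReal_prob (hN : 2 ≤ N) (hp0 : ∀ ℓ, 0 ≤ p ℓ)
    (E : Set (Fin N → List (Fin N))) : graphProb N p E = (prob N p E).toReal := by
  rw [prob, ENNReal.tsum_toReal_eq fun g => ?_, graphProb]
  · refine tsum_congr fun g => ?_
    simp only [indicator_apply, graphWeight_eq_toReal_weight hN hp0]
    split_ifs <;> rfl
  · simp only [indicator_apply]
    split_ifs
    exacts [weight_ne_top hN g, ENNReal.zero_ne_top]

theorem tsum_indicator_nodeWeight {u : Fin N} {A : Finset (Fin N)} (hu : u ∈ A) :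
    ∑' l, {l | ∀ v ∈ l, v ∈ A}.indicator (nodeWeight N p u) l
      = pgf p ((#A - 1 : ℕ) / (N - 1 : ℕ)) := by
  have hset : {l : List (Fin N) | ∀ v ∈ l, v ∈ A} ∩ {l | ∀ v ∈ l, v ≠ u}
      = {l | ∀ v ∈ l, v ∈ A.erase u} := by
    ext l
    simp only [mem_inter_iff, mem_ofPred_eq, Finset.mem_erase, ← forall₂_and, and_comm]
  rw [nodeWeight, indicator_indicator, hset,
    ENNReal.tsum_indicator_forall_mem_list _ (fun n => ENNReal.ofReal (p n)),
    Finset.card_erase_of_mem hu, pgf, div_eq_mul_inv]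

theorem ofReal_tsum_eq_pgf (hp0 : ∀ ℓ, 0 ≤ p ℓ) (hpsum : ∑' ℓ, p ℓ = 1) {x : ℝ} (hx0 : 0 ≤ x)
    (hx1 : x ≤ 1) : ENNReal.ofReal (∑' n, p n * x ^ n) = pgf p (ENNReal.ofReal x) := by
  have hp : Summable p := by
    by_contra h
    rw [tsum_eq_zero_of_not_summable h] at hpsum
    exact zero_ne_one hpsum
  have hs : Summable fun n => p n * x ^ n := Summable.of_nonneg_of_le
    (fun n => mul_nonneg (hp0 n) (pow_nonneg hx0 n))
    (fun n => mul_le_of_le_one_right (hp0 n) (pow_le_one₀ hx0 hx1)) hp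
  rw [ENNReal.ofReal_tsum_of_nonneg (fun n => mul_nonneg (hp0 n) (pow_nonneg hx0 n)) hs, pgf]
  exact tsum_congr fun n => by rw [ENNReal.ofReal_mul (hp0 n), ENNReal.ofReal_pow hx0]

theorem pgf_one (hp0 : ∀ ℓ, 0 ≤ p ℓ) (hpsum : ∑' ℓ, p ℓ = 1) : pgf p 1 = 1 := by
  simpa [hpsum] using (ofReal_tsum_eq_pgf hp0 hpsum zero_le_one le_rfl).symm

theorem tsum_nodeWeight (hN : 2 ≤ N) (hp0 : ∀ ℓ, 0 ≤ p ℓ) (hpsum : ∑' ℓ, p ℓ = 1) (u : Fin N) :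
    ∑' l, nodeWeight N p u l = 1 := by
  have h := tsum_indicator_nodeWeight (p := p) (Finset.mem_univ u)
  simp only [Finset.mem_univ, implies_true, ofPred_true, indicator_univ, Finset.card_univ,
    Fintype.card_fin] at h
  rw [h, ENNReal.div_self (by norm_cast; omega) (ENNReal.natCast_ne_top _), pgf_one hp0 hpsum]

theorem prob_univ (hN : 2 ≤ N) (hp0 : ∀ ℓ, 0 ≤ p ℓ) (hpsum : ∑' ℓ, p ℓ = 1) :
    prob N p univ = 1 := by
  simp only [prob, indicator_univ, weight, ENNReal.tsum_pi_prod, tsum_nodeWeight hN hp0 hpsum,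
    Finset.prod_const_one]

theorem prob_ne_top (hN : 2 ≤ N) (hp0 : ∀ ℓ, 0 ≤ p ℓ) (hpsum : ∑' ℓ, p ℓ = 1)
    (E : Set (Fin N → List (Fin N))) : prob N p E ≠ ⊤ := by
  have hle : prob N p E ≤ prob N p univ := ENNReal.tsum_le_tsum fun g =>
    indicator_le_indicator_of_subset (subset_univ E) (fun _ => bot_le) g
  rw [prob_univ hN hp0 hpsum] at hle
  exact ne_top_of_le_ne_top ENNReal.one_ne_top hle

def edgesInto (B A : Finset (Fin N)) : Set (Fin N → List (Fin N)) :=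
  (B : Set (Fin N)).pi fun _ => {l | ∀ v ∈ l, v ∈ A}

theorem prob_edgesInto (hN : 2 ≤ N) (hp0 : ∀ ℓ, 0 ≤ p ℓ) (hpsum : ∑' ℓ, p ℓ = 1)
    {A B : Finset (Fin N)} (hBA : B ⊆ A) :
    prob N p (edgesInto B A) = pgf p ((#A - 1 : ℕ) / (N - 1 : ℕ)) ^ #B := by
  rw [prob, edgesInto, ← pi_univ_ite,
    show weight N p = fun g => ∏ u, nodeWeight N p u (g u) from rfl, ENNReal.tsum_indicator_univ_pi]
  have hnode : ∀ u, ∑' l, (if u ∈ B then {l | ∀ v ∈ l, v ∈ A} else univ).indicator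
      (nodeWeight N p u) l = if u ∈ B then pgf p ((#A - 1 : ℕ) / (N - 1 : ℕ)) else 1 := by
    intro u
    split_ifs with hu
    · exact tsum_indicator_nodeWeight (hBA hu)
    · rw [indicator_univ, tsum_nodeWeight hN hp0 hpsum]
  simp only [Finset.mem_coe, hnode]
  rw [Finset.prod_ite_mem, Finset.univ_inter, Finset.prod_const]

variable (h0 : 0 < N)

theorem mem_outComp_of_mem {g : Fin N → List (Fin N)} {u v : Fin N}
    (hu : u ∈ outComp N h0 g) (hv : v ∈ g u) : v ∈ outComp N h0 g :=
  Relation.ReflTransGen.tail hu hv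

theorem outComp_subset {A : Finset (Fin N)} (hA : (⟨0, h0⟩ : Fin N) ∈ A)
    {g : Fin N → List (Fin N)} (hg : g ∈ edgesInto A A) : outComp N h0 g ⊆ A := by
  intro v hv
  induction hv with
  | refl => exact hA
  | tail _ hbc ih => exact hg _ ih _ hbc

theorem outComp_congr {g g' : Fin N → List (Fin N)}
    (h : ∀ u ∈ outComp N h0 g, g u = g' u) : outComp N h0 g = outComp N h0 g' := by
  ext v
  constructor
  · intro hv
    induction hv with
    | refl => exact Relation.ReflTransGen.refl
    | tail hb hbc ih => exact mem_outComp_of_mem h0 ih (h _ hb ▸ hbc)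
  · intro hv
    induction hv with
    | refl => exact Relation.ReflTransGen.refl
    | tail _ hbc ih => exact mem_outComp_of_mem h0 ih ((h _ ih).symm ▸ hbc)

theorem dependsOn_outComp_eq (C : Finset (Fin N)) :
    DependsOn (· ∈ {g | outComp N h0 g = C}) (C : Set (Fin N)) := by
  intro g g' h
  simp only [mem_ofPred_eq, eq_iff_iff]
  constructor
  · intro hg
    rw [← outComp_congr h0 fun u hu => h u (hg ▸ hu), hg]
  · intro hg
    rw [← hg, ← outComp_congr h0 fun u hu => (h u (hg ▸ hu)).symm]

theorem pairwiseDisjoint_outComp_eq (s : Set (Finset (Fin N))) :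
    s.PairwiseDisjoint fun C => {g | outComp N h0 g = C} :=
  fun _ _ _ _ hne => disjoint_left.mpr fun _ h h' => hne (Finset.coe_injective (h.symm.trans h'))

def relabel (π : Equiv.Perm (Fin N)) : (Fin N → List (Fin N)) ≃ (Fin N → List (Fin N)) :=
  π.arrowCongr (Equiv.listEquivOfEquiv π)

theorem relabel_apply (π : Equiv.Perm (Fin N)) (g : Fin N → List (Fin N)) (u : Fin N) :
    relabel π g u = (g (π.symm u)).map π := rfl

theorem weight_relabel (π : Equiv.Perm (Fin N)) (g : Fin N → List (Fin N)) :
    weight N p (relabel π g) = weight N p g := by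
  have hnode : ∀ u l, nodeWeight N p (π u) (l.map π) = nodeWeight N p u l := fun u l => by
    simp [nodeWeight, indicator_apply]
  rw [weight, weight, ← Equiv.prod_comp π]
  simp only [relabel_apply, Equiv.symm_apply_apply, hnode]

theorem outComp_relabel {π : Equiv.Perm (Fin N)} (hπ : π ⟨0, h0⟩ = ⟨0, h0⟩)
    (g : Fin N → List (Fin N)) : outComp N h0 (relabel π g) = π '' outComp N h0 g := by
  ext v
  rw [π.image_eq_preimage_symm]
  constructor
  · intro hv
    have := Relation.ReflTransGen.lift (p := fun a b => b ∈ g a) π.symm (fun a b h => by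
      rw [relabel_apply] at h
      obtain ⟨c, hc, rfl⟩ := List.mem_map.mp h
      simpa [Function.onFun] using hc) _ _ hv
    rwa [Function.onFun, π.symm_apply_eq.mpr hπ.symm] at this
  · intro hv
    have := Relation.ReflTransGen.lift (p := fun a b => b ∈ relabel π g a) π (fun a b h => by
      simpa [Function.onFun, relabel_apply] using List.mem_map_of_mem (f := π) h) _ _ hv
    rwa [Function.onFun, hπ, π.apply_symm_apply] at this

theorem dependsOn_edgesInto (B A : Finset (Fin N)) :
    DependsOn (· ∈ edgesInto B A) (B : Set (Fin N)) := by
  intro g g' h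
  simp only [edgesInto, mem_pi, eq_iff_iff]
  exact forall₂_congr fun u hu => by rw [h u hu]

theorem exists_outComp_eq (g : Fin N → List (Fin N)) :
    ∃ C : Finset (Fin N), (⟨0, h0⟩ : Fin N) ∈ C ∧ outComp N h0 g = C :=
  ⟨(outComp N h0 g).toFinset, mem_toFinset.mpr Relation.ReflTransGen.refl,
    (coe_toFinset _).symm⟩

theorem prob_outComp_eq_congr {C C' : Finset (Fin N)} (hC : (⟨0, h0⟩ : Fin N) ∈ C)
    (hC' : (⟨0, h0⟩ : Fin N) ∈ C') (hcard : #C = #C') :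
    prob N p {g | outComp N h0 g = C} = prob N p {g | outComp N h0 g = C'} := by
  obtain ⟨π, hπ, rfl⟩ := Equiv.Perm.exists_apply_eq_self_map_eq hC hC' hcard
  rw [prob, prob, ← Equiv.tsum_eq (relabel π)
    fun g => {g | outComp N h0 g = ↑(C.map π.toEmbedding)}.indicator (weight N p) g]
  refine tsum_congr fun g => ?_
  simp only [indicator_apply, mem_ofPred_eq, weight_relabel, outComp_relabel h0 hπ,
    Finset.coe_map, Equiv.coe_toEmbedding, image_eq_image π.injective]

theorem prob_ncard_outComp {C : Finset (Fin N)} (hC : (⟨0, h0⟩ : Fin N) ∈ C) :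
    prob N p {g | (outComp N h0 g).ncard = #C}
      = (N - 1).choose (#C - 1) * prob N p {g | outComp N h0 g = C} := by
  let S := (Finset.univ : Finset (Finset (Fin N))).filter
    fun C' => (⟨0, h0⟩ : Fin N) ∈ C' ∧ #C' = #C
  have hcover : {g | (outComp N h0 g).ncard = #C} ⊆ ⋃ C' ∈ S, {g | outComp N h0 g = C'} := by
    intro g hg
    obtain ⟨C', hC', hg'⟩ := exists_outComp_eq h0 g
    rw [mem_ofPred_eq, hg', ncard_coe_finset] at hg
    exact mem_biUnion (by simp [S, hC', hg]) hg'
  have hterm : ∀ C' ∈ S, ∑' g, ({g | (outComp N h0 g).ncard = #C} ∩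
      {g | outComp N h0 g = C'}).indicator (weight N p) g = prob N p {g | outComp N h0 g = C} := by
    intro C' hC'
    simp only [S, Finset.mem_filter] at hC'
    have hsub : {g | outComp N h0 g = C'} ⊆ {g | (outComp N h0 g).ncard = #C} :=
      fun g (hg : outComp N h0 g = C') => show _ = _ by rw [hg, ncard_coe_finset, hC'.2.2]
    rw [inter_eq_right.mpr hsub]
    exact prob_outComp_eq_congr h0 hC'.2.1 hC hC'.2.2
  rw [prob, ENNReal.tsum_indicator_eq_sum_inter _ S _ (pairwiseDisjoint_outComp_eq h0 _) hcover,
    Finset.sum_congr rfl hterm, Finset.sum_const, nsmul_eq_mul]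
  congr
  simpa [S] using Finset.card_powerset_filter_mem_card_eq (Finset.mem_univ (⟨0, h0⟩ : Fin N))
    (Finset.card_pos.mpr ⟨_, hC⟩)

theorem edgesInto_inter_outComp_eq {A C : Finset (Fin N)} (hCA : C ⊆ A) :
    edgesInto A A ∩ {g | outComp N h0 g = C} = {g | outComp N h0 g = C} ∩ edgesInto (A \ C) A := by
  ext g
  refine ⟨fun ⟨hA, hC⟩ => ⟨hC, fun u hu => hA u (Finset.sdiff_subset hu)⟩,
    fun ⟨hC, hAC⟩ => ⟨?_, hC⟩⟩
  replace hC : outComp N h0 g = C := hC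
  intro u hu v hv
  by_cases huC : u ∈ C
  · have hv' : v ∈ outComp N h0 g := mem_outComp_of_mem h0 (hC ▸ huC) hv
    rw [hC] at hv'
    exact hCA hv'
  · exact hAC u (Finset.mem_sdiff.mpr ⟨hu, huC⟩) v hv

theorem prob_outComp_eq_inter_edgesInto (hN : 2 ≤ N) (hp0 : ∀ ℓ, 0 ≤ p ℓ)
    (hpsum : ∑' ℓ, p ℓ = 1) {A B C : Finset (Fin N)} (hBC : Disjoint B C) :
    prob N p ({g | outComp N h0 g = C} ∩ edgesInto B A)
      = prob N p {g | outComp N h0 g = C} * prob N p (edgesInto B A) :=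
  ENNReal.tsum_indicator_inter_of_dependsOn _ (tsum_nodeWeight hN hp0 hpsum) _
    (dependsOn_outComp_eq h0 C)
    ((dependsOn_edgesInto B A).mono (by simpa [subset_compl_iff_disjoint_right] using hBC))

theorem prob_edgesInto_eq_sum (hN : 2 ≤ N) (hp0 : ∀ ℓ, 0 ≤ p ℓ) (hpsum : ∑' ℓ, p ℓ = 1)
    {A : Finset (Fin N)} (hA : (⟨0, h0⟩ : Fin N) ∈ A) :
    prob N p (edgesInto A A) = ∑ C ∈ A.powerset with (⟨0, h0⟩ : Fin N) ∈ C,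
      prob N p {g | outComp N h0 g = C} * pgf p ((#A - 1 : ℕ) / (N - 1 : ℕ)) ^ (#A - #C) := by
  have hcover : edgesInto A A ⊆ ⋃ C ∈ {C ∈ A.powerset | (⟨0, h0⟩ : Fin N) ∈ C},
      {g | outComp N h0 g = C} := by
    intro g hg
    obtain ⟨C, hC, hgC⟩ := exists_outComp_eq h0 g
    have hCA : C ⊆ A := fun u hu => outComp_subset h0 hA hg (hgC ▸ hu)
    exact mem_biUnion (by simp [hCA, hC]) hgC
  rw [prob, ENNReal.tsum_indicator_eq_sum_inter _ _ _ (pairwiseDisjoint_outComp_eq h0 _) hcover]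
  refine Finset.sum_congr rfl fun C hC => ?_
  have hCA : C ⊆ A := (Finset.mem_powerset.mp (Finset.mem_filter.mp hC).1)
  rw [edgesInto_inter_outComp_eq h0 hCA, ← prob,
    prob_outComp_eq_inter_edgesInto h0 hN hp0 hpsum Finset.sdiff_disjoint,
    prob_edgesInto hN hp0 hpsum Finset.sdiff_subset, Finset.card_sdiff_of_subset hCA]

theorem pgf_pow_card_eq_sum (hN : 2 ≤ N) (hp0 : ∀ ℓ, 0 ≤ p ℓ) (hpsum : ∑' ℓ, p ℓ = 1)
    {A : Finset (Fin N)} (hA : (⟨0, h0⟩ : Fin N) ∈ A) :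
    pgf p ((#A - 1 : ℕ) / (N - 1 : ℕ)) ^ #A = ∑ k ∈ Finset.Icc 1 #A,
      prob N p {g | (outComp N h0 g).ncard = k} * pgf p ((#A - 1 : ℕ) / (N - 1 : ℕ)) ^ (#A - k)
        * (((#A - 1).choose (k - 1) : ℕ) / ((N - 1).choose (k - 1) : ℕ) : ℝ≥0∞) := by
  set θ := pgf p ((#A - 1 : ℕ) / (N - 1 : ℕ))
  have hmaps : ∀ C ∈ {C ∈ A.powerset | (⟨0, h0⟩ : Fin N) ∈ C}, #C ∈ Finset.Icc 1 #A := by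
    intro C hC
    rw [Finset.mem_filter, Finset.mem_powerset] at hC
    exact Finset.mem_Icc.mpr ⟨Finset.card_pos.mpr ⟨_, hC.2⟩, Finset.card_le_card hC.1⟩
  rw [← prob_edgesInto hN hp0 hpsum subset_rfl, prob_edgesInto_eq_sum h0 hN hp0 hpsum hA,
    ← Finset.sum_fiberwise_of_maps_to hmaps]
  refine Finset.sum_congr rfl fun k hk => ?_
  have hk1 : 1 ≤ k := (Finset.mem_Icc.mp hk).1
  have hterm : ∀ C ∈ {C ∈ {C ∈ A.powerset | (⟨0, h0⟩ : Fin N) ∈ C} | #C = k},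
      prob N p {g | outComp N h0 g = C} * θ ^ (#A - #C)
        = prob N p {g | (outComp N h0 g).ncard = k} / ((N - 1).choose (k - 1) : ℕ)
          * θ ^ (#A - k) := by
    intro C hC
    obtain ⟨hCD, rfl⟩ := Finset.mem_filter.mp hC
    rw [prob_ncard_outComp h0 (Finset.mem_filter.mp hCD).2, mul_comm _ (prob N p _),
      ENNReal.mul_div_cancel_right (by simpa using (Nat.choose_pos (by
        have := C.card_le_univ; rw [Fintype.card_fin] at this; omega)).ne') (by simp)]
  rw [Finset.sum_congr rfl hterm, Finset.sum_const, nsmul_eq_mul, Finset.filter_filter,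
    Finset.card_powerset_filter_mem_card_eq hA hk1, div_eq_mul_inv, div_eq_mul_inv]
  ring

theorem ofReal_sub_one_div_sub_one {M : ℕ} (hM : 1 ≤ M) (hN : 2 ≤ N) :
    ENNReal.ofReal (((M : ℝ) - 1) / ((N : ℝ) - 1)) = ((M - 1 : ℕ) / (N - 1 : ℕ) : ℝ≥0∞) := by
  rw [← Nat.cast_pred hM, ← Nat.cast_pred (by omega : 0 < N),
    ENNReal.ofReal_div_of_pos (by exact_mod_cast (by omega : 0 < N - 1)),
    ENNReal.ofReal_natCast, ENNReal.ofReal_natCast]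

theorem toReal_pgf_pow_card_eq_sum (hN : 2 ≤ N) (hp0 : ∀ ℓ, 0 ≤ p ℓ)
    (hpsum : ∑' ℓ, p ℓ = 1) {A : Finset (Fin N)} (hA : (⟨0, h0⟩ : Fin N) ∈ A) :
    (pgf p ((#A - 1 : ℕ) / (N - 1 : ℕ))).toReal ^ #A = ∑ k ∈ Finset.Icc 1 #A,
      qProb N h0 p k * (pgf p ((#A - 1 : ℕ) / (N - 1 : ℕ))).toReal ^ (#A - k)
        * (((#A - 1).choose (k - 1) : ℝ) / ((N - 1).choose (k - 1) : ℝ)) := by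
  have hθ : pgf p ((#A - 1 : ℕ) / (N - 1 : ℕ)) ≠ ⊤ := by
    rw [← tsum_indicator_nodeWeight hA]
    exact ne_top_of_le_ne_top ENNReal.one_ne_top (tsum_nodeWeight hN hp0 hpsum _ ▸
      ENNReal.tsum_le_tsum fun l => indicator_le_self _ _ l)
  have hfin : ∀ k ∈ Finset.Icc 1 #A, prob N p {g | (outComp N h0 g).ncard = k}
      * pgf p ((#A - 1 : ℕ) / (N - 1 : ℕ)) ^ (#A - k)
      * (((#A - 1).choose (k - 1) : ℕ) / ((N - 1).choose (k - 1) : ℕ) : ℝ≥0∞) ≠ ⊤ := by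
    intro k hk
    have hkN : k - 1 ≤ N - 1 := by
      have := (Finset.mem_Icc.mp hk).2; have := A.card_le_univ; simp at this; omega
    refine ENNReal.mul_ne_top
      (ENNReal.mul_ne_top (prob_ne_top hN hp0 hpsum _) (ENNReal.pow_ne_top hθ)) ?_
    exact ENNReal.div_ne_top (by finiteness) (by simpa using (Nat.choose_pos hkN).ne')
  rw [← ENNReal.toReal_pow, pgf_pow_card_eq_sum h0 hN hp0 hpsum hA, ENNReal.toReal_sum hfin]
  simp only [ENNReal.toReal_mul, ENNReal.toReal_pow, ENNReal.toReal_div, ENNReal.toReal_natCast,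
    qProb, graphProb_eq_toReal_prob hN hp0]

end RandomDigraph

theorem final_size_binomial_identity
    (N : ℕ) (hN : 2 ≤ N) (p : ℕ → ℝ)
    (hp0 : ∀ ℓ, 0 ≤ p ℓ) (hpsum : ∑' ℓ, p ℓ = 1)
    (μ : ℝ → ℝ) (hμ : ∀ x, μ x = ∑' ℓ, p ℓ * x ^ ℓ)
    (M : ℕ) (hM1 : 1 ≤ M) (hMN : M ≤ N) :
    (μ (((M : ℝ) - 1) / ((N : ℝ) - 1))) ^ M =
      ∑ k ∈ Finset.Icc 1 M,
        qProb N (by omega) p k *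
          (μ (((M : ℝ) - 1) / ((N : ℝ) - 1))) ^ (M - k) *
          (((M - 1).choose (k - 1) : ℝ) / ((N - 1).choose (k - 1) : ℝ)) := by
  have h0 : 0 < N := by omega
  obtain ⟨A, hA0, -, hAM⟩ := Finset.exists_subsuperset_card_eq
    (Finset.subset_univ {(⟨0, h0⟩ : Fin N)}) (by simpa using hM1) (by simpa using hMN)
  set x : ℝ := ((M : ℝ) - 1) / ((N : ℝ) - 1)
  have hx0 : 0 ≤ x := div_nonneg (by simp [hM1]) (by simp; omega)
  have hx1 : x ≤ 1 := div_le_one_of_le₀ (by simp [hMN]) (by simp; omega)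
  have hθ : (RandomDigraph.pgf p ((M - 1 : ℕ) / (N - 1 : ℕ))).toReal = μ x := by
    rw [← RandomDigraph.ofReal_sub_one_div_sub_one hM1 hN,
      ← RandomDigraph.ofReal_tsum_eq_pgf hp0 hpsum hx0 hx1, hμ,
      ENNReal.toReal_ofReal (tsum_nonneg fun n => mul_nonneg (hp0 n) (pow_nonneg hx0 n))]
  simpa only [hθ, hAM] using RandomDigraph.toReal_pgf_pow_card_eq_sum h0 hN hp0 hpsum
    (Finset.singleton_subset_iff.mp hA0)
end

section
/- Consider the random directed multigraph model on N nodes with offspring PGF μ. For every M and k with 1 ≤ k ≤ M ≤ N, the probability of the event that (i) the out-component of node 0 has exactly k nodes, (ii) all of these k nodes lie in {0,1,...,M-1}, and (iii) no node of {0,1,...,M-1} outside the out-component of node 0 has any edge to a node in {M,...,N-1}, equals q_k · [μ((M-1)/(N-1))]^{M-k} · ( C(M-1,k-1) / C(N-1,k-1) ). -/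
/-!
Work with the out-lists of the nodes as independent coordinates of a product measure. The event
that the out-component `C` of node `0` is a given set `S` only involves the out-lists of nodes
in `S`, so it is independent of the out-lists of the other nodes; each of the `M - k` nodes of
`{0, …, M-1} \ S` then contributes the factor `μ((M-1)/(N-1))`, the probability that all of its
out-neighbours fall among the `M - 1` allowed nodes. The model is invariant under relabelling
the nodes, so `P(C = S)` depends only on `|S|` for `0 ∈ S`; summing over the `C(M-1, k-1)`
admissible `S ⊆ {0, …, M-1}`, against the `C(N-1, k-1)` sets that make up `q_k`, gives the
ratio of binomial coefficients.
-/

open scoped Classical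

open scoped ENNReal

theorem ENNReal.tsum_pi_prod_s2 {ι β : Type*} [Fintype ι] (f : ι → β → ℝ≥0∞) :
    ∑' g : ι → β, ∏ i, f i (g i) = ∏ i, ∑' b, f i b := by
  suffices h : ∀ n (f : Fin n → β → ℝ≥0∞), ∑' g : Fin n → β, ∏ i, f i (g i) = ∏ i, ∑' b, f i b by
    let e := Fintype.equivFin ι
    rw [← (e.arrowCongr (Equiv.refl β)).symm.tsum_eq, ← e.symm.prod_comp, ← h]
    refine tsum_congr fun g => ?_
    rw [← e.symm.prod_comp]
    simp
  intro n
  induction n with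
  | zero => intro f; simp
  | succ n ih =>
    intro f
    rw [← (Fin.consEquiv fun _ => β).tsum_eq, ENNReal.tsum_prod', Fin.prod_univ_succ, ← ih,
      ← ENNReal.tsum_mul_right]
    refine tsum_congr fun b => ?_
    rw [← ENNReal.tsum_mul_left]
    refine tsum_congr fun g => ?_
    simp [Fin.prod_univ_succ]

theorem ENNReal.tsum_list_indicator_forall_mem {β : Type*} [Fintype β] (s : Finset β)
    (φ : ℕ → ℝ≥0∞) :
    ∑' l : List β, {l | ∀ v ∈ l, v ∈ s}.indicator (fun l => φ l.length) l =
      ∑' n, (s.card : ℝ≥0∞) ^ n * φ n := by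
  rw [← List.equivSigmaTuple.symm.tsum_eq, ENNReal.tsum_sigma']
  refine tsum_congr fun n => ?_
  rw [tsum_fintype]
  have hpi : Finset.univ.filter (fun f : Fin n → β => ∀ i, f i ∈ s) =
      Fintype.piFinset fun _ => s := by
    ext
    simp
  simp only [List.equivSigmaTuple, Equiv.coe_fn_symm_mk, Set.indicator_apply, Set.mem_ofPred_eq,
    List.forall_mem_ofFn_iff, List.length_ofFn]
  rw [Finset.sum_ite, Finset.sum_const_zero, add_zero, Finset.sum_const, nsmul_eq_mul, hpi,
    Fintype.card_piFinset]
  simp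

section piMass

variable {ι β : Type*} [Fintype ι]

/-- Computed in `ℝ≥0∞`, where every sum converges and sums of products factor; `graphProb` is
recovered with `toReal` (`graphProb_eq_toReal_piMass`). -/
noncomputable def piMass (w : ι → β → ℝ≥0∞) (E : Set (ι → β)) : ℝ≥0∞ :=
  ∑' g, E.indicator (fun g => ∏ i, w i (g i)) g

variable {w : ι → β → ℝ≥0∞}

theorem piMass_biUnion_finset {κ : Type*} (s : Finset κ) (E : κ → Set (ι → β))
    (hE : (s : Set κ).PairwiseDisjoint E) :
    piMass w (⋃ a ∈ s, E a) = ∑ a ∈ s, piMass w (E a) := by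
  simp only [piMass, Finset.indicator_biUnion_apply s E hE]
  exact Summable.tsum_finsetSum fun _ _ => ENNReal.summable

theorem piMass_preimage_equiv (Ψ : (ι → β) ≃ (ι → β))
    (hΨ : ∀ g, ∏ i, w i (Ψ g i) = ∏ i, w i (g i)) (E : Set (ι → β)) :
    piMass w (Ψ ⁻¹' E) = piMass w E := by
  rw [piMass, piMass]
  conv_rhs => rw [← Ψ.tsum_eq]
  refine tsum_congr fun g => ?_
  simp only [Set.indicator_apply, Set.mem_preimage, hΨ]

theorem tsum_indicator_prod_eq_toReal_piMass {f : ι → β → ℝ} (hf : ∀ i b, 0 ≤ f i b)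
    (E : Set (ι → β)) :
    ∑' g, E.indicator (fun g => ∏ i, f i (g i)) g
      = (piMass (fun i b => ENNReal.ofReal (f i b)) E).toReal := by
  rw [piMass, ENNReal.tsum_toReal_eq fun g => ?_]
  · refine tsum_congr fun g => ?_
    by_cases hg : g ∈ E
    · simp [hg, ENNReal.toReal_prod, ENNReal.toReal_ofReal (hf _ _)]
    · simp [hg]
  · by_cases hg : g ∈ E <;> simp [hg, ENNReal.prod_ne_top]

theorem piMass_inter_forall_notMem_eq_mul [DecidableEq ι] (s : Finset ι) {A : Set (ι → β)}
    (hA : ∀ g g', (∀ i ∈ s, g i = g' i) → g ∈ A → g' ∈ A) (B : ι → Set β) :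
    piMass w (A ∩ {g | ∀ i ∉ s, g i ∈ B i}) =
      piMass (fun i : s => w i) ((fun g (i : s) => g i) '' A) *
        ∏ i ∈ sᶜ, ∑' b, (B i).indicator (w i) b := by
  let e := Equiv.piEquivPiSubtypeProd (· ∈ s) (fun _ => β)
  have key : ∀ x y, (A ∩ {g | ∀ i ∉ s, g i ∈ B i}).indicator (fun g => ∏ i, w i (g i))
      (e.symm (x, y)) = ((fun g (i : s) => g i) '' A).indicator (fun x => ∏ i : s, w i (x i)) x *
        ∏ i : {i // i ∉ s}, (B i).indicator (w i) (y i) := by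
    intro x y
    set g := e.symm (x, y)
    have hgx : (fun i : s => g i) = x := funext fun i => by simp [g, e, i.2]
    have hgy : ∀ i : {i // i ∉ s}, g i = y i := fun i => by simp [g, e, i.2]
    have hA' : g ∈ A ↔ x ∈ (fun g (i : s) => g i) '' A :=
      ⟨fun h => ⟨g, h, hgx⟩, fun ⟨g', hg', hx⟩ =>
        hA g' g (fun i hi => by rw [← hgx] at hx; exact congrFun hx ⟨i, hi⟩) hg'⟩
    by_cases hgB : ∀ i ∉ s, g i ∈ B i
    · have hB : ∀ i : {i // i ∉ s}, y i ∈ B i := fun i => hgy i ▸ hgB i i.2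
      simp only [Set.indicator_of_mem (hB _)]
      by_cases hgA : g ∈ A
      · rw [Set.indicator_of_mem (show g ∈ A ∩ {g | ∀ i ∉ s, g i ∈ B i} from ⟨hgA, hgB⟩),
          Set.indicator_of_mem (hA'.1 hgA), ← Fintype.prod_subtype_mul_prod_subtype (· ∈ s), ← hgx]
        simp only [hgy]
        congr!
      · simp [hgA, mt hA'.2 hgA]
    · obtain ⟨i, hi, hiB⟩ := not_forall₂.1 hgB
      rw [Finset.prod_eq_zero (Finset.mem_univ ⟨i, hi⟩) (by simp [← hgy ⟨i, hi⟩, hiB])]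
      simp [hgB]
  rw [piMass, ← e.symm.tsum_eq, ENNReal.tsum_prod', tsum_congr fun x => tsum_congr (key x),
    Finset.prod_subtype sᶜ (fun _ => Finset.mem_compl), ← ENNReal.tsum_pi_prod_s2, piMass,
    ← ENNReal.tsum_mul_right]
  exact tsum_congr fun x => ENNReal.tsum_mul_left

theorem piMass_inter_forall_notMem [DecidableEq ι] (s : Finset ι) {A : Set (ι → β)}
    (hA : ∀ g g', (∀ i ∈ s, g i = g' i) → g ∈ A → g' ∈ A) (B : ι → Set β)
    (hw : ∀ i ∉ s, ∑' b, w i b = 1) :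
    piMass w (A ∩ {g | ∀ i ∉ s, g i ∈ B i}) =
      piMass w A * ∏ i ∈ sᶜ, ∑' b, (B i).indicator (w i) b := by
  have hA_mass := piMass_inter_forall_notMem_eq_mul (w := w) s hA fun _ => Set.univ
  simp only [Set.mem_univ, implies_true, Set.ofPred_true, Set.inter_univ,
    Set.indicator_univ] at hA_mass
  rw [Finset.prod_congr rfl fun i hi => hw i (Finset.mem_compl.1 hi), Finset.prod_const_one,
    mul_one] at hA_mass
  rw [piMass_inter_forall_notMem_eq_mul s hA, hA_mass]

end piMass

section reach

variable {V : Type*}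

def reach (g : V → List V) (r : V) : Set V :=
  {v | Relation.ReflTransGen (fun a b => b ∈ g a) r v}

def relabel (σ : Equiv.Perm V) : (V → List V) ≃ (V → List V) :=
  σ.arrowCongr (Equiv.listEquivOfEquiv σ)

theorem relabel_apply (σ : Equiv.Perm V) (g : V → List V) (u : V) :
    relabel σ g u = (g (σ.symm u)).map σ :=
  rfl

theorem mem_reach_self (g : V → List V) (r : V) : r ∈ reach g r :=
  .refl

theorem reach_relabel (σ : Equiv.Perm V) (g : V → List V) (r : V) :
    reach (relabel σ g) (σ r) = σ '' reach g r := by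
  ext v
  rw [σ.image_eq_preimage_symm]
  constructor
  · intro h
    have := Relation.ReflTransGen.lift (p := fun a b => b ∈ g a) σ.symm
      (fun a b hab => by
        obtain ⟨c, hc, rfl⟩ := List.mem_map.1 hab
        simpa [Function.onFun] using hc) _ _ h
    simpa [Function.onFun, reach] using this
  · intro h
    have := Relation.ReflTransGen.lift (p := fun a b => b ∈ relabel σ g a) σ
      (fun a b hab => by simpa [Function.onFun, relabel_apply] using hab) _ _ h
    simpa [Function.onFun, reach] using this

theorem reach_eq_of_eqOn {g g' : V → List V} {r : V} {S : Set V} (h : reach g r = S)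
    (hgg' : ∀ u ∈ S, g u = g' u) : reach g' r = S := by
  subst h
  refine subset_antisymm (fun v hv => ?_) fun v hv => ?_
  · induction hv with
    | refl => exact .refl
    | tail _ hbc ih => exact ih.tail (by rwa [hgg' _ ih])
  · induction hv with
    | refl => exact .refl
    | tail hab hbc ih => exact ih.tail (by rwa [← hgg' _ hab])

end reach

open scoped Pointwise in
theorem Finset.exists_perm_apply_eq_and_image_eq {V : Type*} [DecidableEq V] {r : V}
    {S T : Finset V} (hS : r ∈ S) (hT : r ∈ T) (h : S.card = T.card) :
    ∃ σ : Equiv.Perm V, σ r = r ∧ S.image σ = T := by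
  obtain ⟨σ, hσ⟩ := (Set.powersetCard.isPretransitive (α := V) (n := T.card)).exists_smul_eq
    ⟨S, h⟩ ⟨T, rfl⟩
  have hσST : S.image σ = T := by
    simpa [Finset.smul_finset_def, Equiv.Perm.smul_def] using congrArg Subtype.val hσ
  have hσr : σ r ∈ T := hσST ▸ Finset.mem_image_of_mem σ hS
  -- `σ r` and `r` both lie in `T`, so swapping them fixes `T` and puts `r` back in place
  refine ⟨Equiv.swap (σ r) r * σ, by simp, ?_⟩
  rw [Equiv.Perm.coe_mul, ← Finset.image_image, hσST]
  refine Finset.eq_of_subset_of_card_le (Finset.image_subset_iff.2 fun v hv => ?_)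
    (Finset.card_image_of_injective _ (Equiv.injective _)).ge
  rw [Equiv.swap_apply_def]
  split_ifs <;> assumption

section exchangeable

variable {V : Type*}

def RelabelInvariant (w : V → List V → ℝ≥0∞) : Prop :=
  ∀ (σ : Equiv.Perm V) u l, w (σ u) (l.map σ) = w u l

variable [Fintype V] {w : V → List V → ℝ≥0∞}

theorem prod_relabel (hw : RelabelInvariant w) (σ : Equiv.Perm V) (g : V → List V) :
    ∏ u, w u (relabel σ g u) = ∏ u, w u (g u) := by
  rw [← Equiv.prod_comp σ]
  simp [relabel_apply, hw σ]

theorem piMass_reach_eq_image (hw : RelabelInvariant w)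
    {σ : Equiv.Perm V} {r : V} (hσ : σ r = r) (S : Set V) :
    piMass w {g | reach g r = σ '' S} = piMass w {g | reach g r = S} := by
  rw [← piMass_preimage_equiv (relabel σ) (prod_relabel hw σ)]
  congr 1
  ext g
  have h := reach_relabel σ g r
  rw [hσ] at h
  simp only [Set.mem_preimage, Set.mem_ofPred_eq, h, (Set.image_injective.2 σ.injective).eq_iff]

theorem piMass_reach_eq_of_card_eq [DecidableEq V] (hw : RelabelInvariant w) {r : V}
    {S T : Finset V} (hS : r ∈ S) (hT : r ∈ T) (h : S.card = T.card) :
    piMass w {g | reach g r = S} = piMass w {g | reach g r = T} := by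
  obtain ⟨σ, hσr, rfl⟩ := Finset.exists_perm_apply_eq_and_image_eq hS hT h
  rw [Finset.coe_image, piMass_reach_eq_image hw hσr]

end exchangeable

section confined

variable {V : Type*} [Fintype V] [DecidableEq V]

theorem setOf_reach_confined_eq_biUnion (r : V) (t : Set V) (k : ℕ) :
    {g : V → List V | (reach g r).ncard = k ∧ reach g r ⊆ t ∧
        ∀ u, u ∈ t → u ∉ reach g r → ∀ v ∈ g u, v ∈ t} =
      ⋃ S ∈ (t.toFinset.powersetCard k).filter ({r} ⊆ ·),
        {g | reach g r = S} ∩ {g | ∀ u ∉ S, g u ∈ {l | u ∈ t → ∀ v ∈ l, v ∈ t}} := by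
  ext g
  simp only [Set.mem_iUnion, Finset.mem_filter, Finset.mem_powersetCard, Set.mem_inter_iff,
    Set.mem_ofPred_eq, Finset.singleton_subset_iff, exists_prop]
  constructor
  · rintro ⟨hk, ht, hout⟩
    refine ⟨(reach g r).toFinset, ⟨⟨?_, ?_⟩, ?_⟩, by simp, fun u hu hut => ?_⟩
    · simpa using ht
    · rwa [← Set.ncard_eq_toFinset_card']
    · simpa using mem_reach_self g r
    · exact hout u hut (by simpa using hu)
  · rintro ⟨S, ⟨⟨hSt, rfl⟩, -⟩, hS, hout⟩
    rw [hS]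
    exact ⟨Set.ncard_coe_finset S, by simpa using hSt, fun u hut hu => hout u hu hut⟩

variable {w : V → List V → ℝ≥0∞}

theorem piMass_reach_eq_inter_confined (hw1 : ∀ u, ∑' l, w u l = 1) {t : Set V} {m : ℝ≥0∞}
    (hwt : ∀ u ∈ t, ∑' l, {l | ∀ v ∈ l, v ∈ t}.indicator (w u) l = m) (r : V) {S : Finset V}
    (hSt : S ⊆ t.toFinset) :
    piMass w ({g | reach g r = S} ∩ {g | ∀ u ∉ S, g u ∈ {l | u ∈ t → ∀ v ∈ l, v ∈ t}}) =
      piMass w {g | reach g r = S} * m ^ (t.toFinset.card - S.card) := by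
  rw [piMass_inter_forall_notMem S (A := {g | reach g r = S})
    (fun g g' hgg' h => reach_eq_of_eqOn h hgg') _ fun u _ => hw1 u]
  have hmass : ∀ u, ∑' l, {l | u ∈ t → ∀ v ∈ l, v ∈ t}.indicator (w u) l =
      if u ∈ t.toFinset then m else 1 := by
    intro u
    by_cases hu : u ∈ t
    · simp [hu, ← hwt u hu]
    · simp [hu, hw1]
  rw [Finset.prod_congr rfl fun u _ => hmass u, Finset.prod_ite_mem, Finset.prod_const,
    Finset.inter_comm, ← Finset.sdiff_eq_inter_compl, Finset.card_sdiff_of_subset hSt]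

theorem piMass_reach_confined (hw : RelabelInvariant w) (hw1 : ∀ u, ∑' l, w u l = 1)
    {t : Set V} {m : ℝ≥0∞} (hwt : ∀ u ∈ t, ∑' l, {l | ∀ v ∈ l, v ∈ t}.indicator (w u) l = m)
    {r : V} (hr : r ∈ t) {k : ℕ} (hk : 1 ≤ k) {S₀ : Finset V} (hrS₀ : r ∈ S₀)
    (hS₀ : S₀.card = k) :
    piMass w {g | (reach g r).ncard = k ∧ reach g r ⊆ t ∧
        ∀ u, u ∈ t → u ∉ reach g r → ∀ v ∈ g u, v ∈ t} =
      ((t.ncard - 1).choose (k - 1) : ℝ≥0∞) * piMass w {g | reach g r = S₀} *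
        m ^ (t.ncard - k) := by
  rw [setOf_reach_confined_eq_biUnion, piMass_biUnion_finset _ _ fun S _ T _ hST =>
      Set.disjoint_left.2 fun g hS hT => hST (Finset.coe_injective (hS.1.symm.trans hT.1)),
    Finset.sum_congr rfl fun S hS => ?_, Finset.sum_const, nsmul_eq_mul,
    Finset.card_filter_powersetCard_subset _ _ _ (by simpa using hr) (by simpa using hk),
    Finset.card_singleton, mul_assoc, Set.ncard_eq_toFinset_card']
  simp only [Finset.mem_filter, Finset.mem_powersetCard, Finset.singleton_subset_iff] at hS
  obtain ⟨⟨hSt, hSk⟩, hrS⟩ := hS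
  rw [piMass_reach_eq_inter_confined hw1 hwt r hSt,
    piMass_reach_eq_of_card_eq hw hrS hrS₀ (hSk.trans hS₀.symm), hSk]

theorem piMass_reach_ncard_eq (hw : RelabelInvariant w) (hw1 : ∀ u, ∑' l, w u l = 1) {r : V}
    {k : ℕ} (hk : 1 ≤ k) {S₀ : Finset V} (hrS₀ : r ∈ S₀) (hS₀ : S₀.card = k) :
    piMass w {g | (reach g r).ncard = k} =
      ((Nat.card V - 1).choose (k - 1) : ℝ≥0∞) * piMass w {g | reach g r = S₀} := by
  simpa using piMass_reach_confined hw hw1 (t := Set.univ) (m := 1)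
    (fun u _ => by simpa using hw1 u) (Set.mem_univ r) hk hrS₀ hS₀

end confined

section model

variable {N : ℕ} {p : ℕ → ℝ}

noncomputable def nodeWeight (N : ℕ) (p : ℕ → ℝ) (u : Fin N) (l : List (Fin N)) : ℝ≥0∞ :=
  ENNReal.ofReal (if ∀ v ∈ l, v ≠ u then p l.length * (1 / ((N : ℝ) - 1)) ^ l.length else 0)

theorem graphProb_eq_toReal_piMass (hp0 : ∀ ℓ, 0 ≤ p ℓ) (E : Set (Fin N → List (Fin N))) :
    graphProb N p E = (piMass (nodeWeight N p) E).toReal := by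
  refine tsum_indicator_prod_eq_toReal_piMass (f := fun u l =>
    if ∀ v ∈ l, v ≠ u then p l.length * (1 / ((N : ℝ) - 1)) ^ l.length else 0) (fun u l => ?_) E
  have hc : (0 : ℝ) ≤ 1 / ((N : ℝ) - 1) :=
    one_div_nonneg.2 (sub_nonneg.2 (Nat.one_le_cast.2 u.pos))
  split_ifs
  exacts [mul_nonneg (hp0 _) (pow_nonneg hc _), le_rfl]

theorem relabelInvariant_nodeWeight : RelabelInvariant (nodeWeight N p) := by
  intro σ u l
  simp [nodeWeight]

theorem tsum_indicator_nodeWeight (hp0 : ∀ ℓ, 0 ≤ p ℓ) (hp : Summable p) {t : Set (Fin N)}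
    {u : Fin N} (hu : u ∈ t) :
    ∑' l, {l | ∀ v ∈ l, v ∈ t}.indicator (nodeWeight N p u) l =
      ENNReal.ofReal (∑' n, p n * (((t.ncard : ℝ) - 1) / ((N : ℝ) - 1)) ^ n) := by
  rw [Set.ncard_eq_toFinset_card']
  set x := ((t.toFinset.card : ℝ) - 1) / ((N : ℝ) - 1) with hx
  have hut : u ∈ t.toFinset := Set.mem_toFinset.2 hu
  have hcard : ((t.toFinset.erase u).card : ℝ) = t.toFinset.card - 1 := by
    rw [Finset.card_erase_of_mem hut, Nat.cast_sub (Finset.card_pos.2 ⟨u, hut⟩), Nat.cast_one]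
  have hx0 : 0 ≤ x := div_nonneg (by rw [← hcard]; positivity)
    (sub_nonneg.2 (Nat.one_le_cast.2 u.pos))
  have hx1 : x ≤ 1 := by
    refine div_le_one_of_le₀ (sub_le_sub_right ?_ 1) (sub_nonneg.2 (Nat.one_le_cast.2 u.pos))
    simpa using t.toFinset.card_le_univ
  have hl : ∀ l, {l | ∀ v ∈ l, v ∈ t}.indicator (nodeWeight N p u) l =
      {l | ∀ v ∈ l, v ∈ t.toFinset.erase u}.indicator
        (fun l => ENNReal.ofReal (p l.length * (1 / ((N : ℝ) - 1)) ^ l.length)) l := by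
    intro l
    simp only [Set.indicator_apply, Set.mem_ofPred_eq, Finset.mem_erase, Set.mem_toFinset,
      nodeWeight]
    split_ifs <;> first | exact ENNReal.ofReal_zero | grind
  rw [tsum_congr hl, ENNReal.tsum_list_indicator_forall_mem _
      fun n => ENNReal.ofReal (p n * (1 / ((N : ℝ) - 1)) ^ n),
    ENNReal.ofReal_tsum_of_nonneg (fun n => mul_nonneg (hp0 n) (pow_nonneg hx0 n))
      (hp.of_nonneg_of_le (fun n => mul_nonneg (hp0 n) (pow_nonneg hx0 n))
        fun n => mul_le_of_le_one_right (hp0 n) (pow_le_one₀ hx0 hx1))]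
  refine tsum_congr fun n => ?_
  rw [← ENNReal.ofReal_natCast, ← ENNReal.ofReal_pow (Nat.cast_nonneg _),
    ← ENNReal.ofReal_mul (by positivity), hcard, hx, div_eq_mul_one_div (_ - 1) ((N : ℝ) - 1),
    mul_pow, mul_left_comm]

theorem tsum_nodeWeight (hN : 2 ≤ N) (hp0 : ∀ ℓ, 0 ≤ p ℓ) (hp : Summable p)
    (hpsum : ∑' ℓ, p ℓ = 1) (u : Fin N) : ∑' l, nodeWeight N p u l = 1 := by
  have hN1 : (N : ℝ) - 1 ≠ 0 := sub_ne_zero.2 (by exact_mod_cast (by omega : N ≠ 1))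
  simpa [hN1, hpsum] using tsum_indicator_nodeWeight hp0 hp (Set.mem_univ u)

theorem Fin.ncard_setOf_val_lt {M : ℕ} (hMN : M ≤ N) : {v : Fin N | (v : ℕ) < M}.ncard = M := by
  simp [Set.ncard_eq_toFinset_card', Fin.card_filter_val_lt, hMN]

theorem tsum_indicator_nodeWeight_val_lt (hp0 : ∀ ℓ, 0 ≤ p ℓ) (hp : Summable p) {M : ℕ}
    (hMN : M ≤ N) (u : Fin N) (hu : u ∈ {v : Fin N | (v : ℕ) < M}) :
    ∑' l, {l | ∀ v ∈ l, v ∈ {v : Fin N | (v : ℕ) < M}}.indicator (nodeWeight N p u) l =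
      ENNReal.ofReal (∑' n, p n * (((M : ℝ) - 1) / ((N : ℝ) - 1)) ^ n) := by
  rw [tsum_indicator_nodeWeight hp0 hp hu, Fin.ncard_setOf_val_lt hMN]

end model

theorem outcomponent_contained_event_probability
    (N : ℕ) (hN : 2 ≤ N) (p : ℕ → ℝ)
    (hp0 : ∀ ℓ, 0 ≤ p ℓ) (hpsum : ∑' ℓ, p ℓ = 1)
    (μ : ℝ → ℝ) (hμ : ∀ x, μ x = ∑' ℓ, p ℓ * x ^ ℓ)
    (M k : ℕ) (hk1 : 1 ≤ k) (hkM : k ≤ M) (hMN : M ≤ N) :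
    graphProb N p
      {g | (outComp N (by omega) g).ncard = k ∧
           (outComp N (by omega) g) ⊆ {v : Fin N | (v : ℕ) < M} ∧
           ∀ u : Fin N, (u : ℕ) < M → u ∉ outComp N (by omega) g →
             ∀ v ∈ g u, (v : ℕ) < M} =
      qProb N (by omega) p k *
        (μ (((M : ℝ) - 1) / ((N : ℝ) - 1))) ^ (M - k) *
        (((M - 1).choose (k - 1) : ℝ) / ((N - 1).choose (k - 1) : ℝ)) := by
  have hp : Summable p := by
    by_contra h
    simp [tsum_eq_zero_of_not_summable h] at hpsum
  have hμ0 : 0 ≤ μ (((M : ℝ) - 1) / ((N : ℝ) - 1)) := by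
    rw [hμ]
    refine tsum_nonneg fun n => mul_nonneg (hp0 n) (pow_nonneg (div_nonneg ?_ ?_) n) <;>
      norm_num <;> omega
  obtain ⟨S₀, hrS₀, -, hS₀⟩ := Finset.exists_subsuperset_card_eq
    (Finset.subset_univ {(⟨0, by omega⟩ : Fin N)}) (by simpa using hk1)
    (by simpa using hkM.trans hMN)
  rw [Finset.singleton_subset_iff] at hrS₀
  have hw1 := tsum_nodeWeight hN hp0 hp hpsum
  have hq := piMass_reach_ncard_eq relabelInvariant_nodeWeight hw1 hk1 hrS₀ hS₀
  have hL := piMass_reach_confined relabelInvariant_nodeWeight hw1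
    (fun u hu => (tsum_indicator_nodeWeight_val_lt hp0 hp hMN u hu).trans (by rw [← hμ]))
    (show 0 < M by omega) hk1 hrS₀ hS₀
  rw [qProb, graphProb_eq_toReal_piMass hp0, graphProb_eq_toReal_piMass hp0]
  -- `outComp N _ g` unfolds to `reach g ⟨0, _⟩`
  erw [hL, hq]
  have hC : ((N - 1).choose (k - 1) : ℝ) ≠ 0 := Nat.cast_ne_zero.2 (Nat.choose_pos (by omega)).ne'
  simp only [Fin.ncard_setOf_val_lt hMN, Nat.card_eq_fintype_card, Fintype.card_fin,
    ENNReal.toReal_mul, ENNReal.toReal_pow, ENNReal.toReal_natCast, ENNReal.toReal_ofReal hμ0]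
  field_simp
end

section
/- Consider the random Bernoulli directed graph model on N nodes with edge probability p, and for 1 ≤ k ≤ N let q_k be the probability that the out-component of node 0 has exactly k nodes. For every M with 1 ≤ M ≤ N: (1-p)^{M(N-M)} = ∑_{k=1}^{M} q_k · ( C(M-1,k-1) / C(N-1,k-1) ) · (1-p)^{(M-k)(N-M)}, where C(n,r) denotes the binomial coefficient. -/
open scoped Classical

/-- The weight (probability) of a realization `g` of the random Bernoulli directed graph
on `N` nodes: independently for each ordered pair `(u, v)` of distinct nodes, the edge
from `u` to `v` is present with probability `p`.  Self-loops never occur. -/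
noncomputable def bernWeight (N : ℕ) (p : ℝ) (g : Fin N → Fin N → Bool) : ℝ :=
  ∏ u : Fin N, ∏ v : Fin N,
    if u = v then (if g u v then 0 else 1)
    else (if g u v then p else 1 - p)

/-- Probability of an event in the random Bernoulli directed graph model. -/
noncomputable def bernProb (N : ℕ) (p : ℝ) (E : Set (Fin N → Fin N → Bool)) : ℝ :=
  ∑' g : Fin N → Fin N → Bool, Set.indicator E (bernWeight N p) g

/-- The out-component of node `0`: the set of nodes reachable from node `0`
(including node `0` itself) following directed edges. -/
def bernOutComp (N : ℕ) (hN : 0 < N) (g : Fin N → Fin N → Bool) : Set (Fin N) :=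
  {v | Relation.ReflTransGen (fun a b => g a b = true) ⟨0, hN⟩ v}

/-- `bernQProb N hN p k` is the probability that the out-component of node `0` has
exactly `k` nodes. -/
noncomputable def bernQProb (N : ℕ) (hN : 0 < N) (p : ℝ) (k : ℕ) : ℝ :=
  bernProb N p {g | (bernOutComp N hN g).ncard = k}

/-!
Fix `A ∋ 0` with `|A| = M`. No edge leaves `A` exactly when the out-component `C` of `0` is
some `S ⊆ A` and no edge goes from `A \ S` to the outside of `A`. The event `C = S` only involves
edges leaving `S`, hence is independent of the second event, and
`(1-p)^(M(N-M)) = ∑_{0 ∈ S ⊆ A} P(C = S) (1-p)^((M-|S|)(N-M))`.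
Averaging over the `C(N-1, M-1)` choices of `A`, a set `S ∋ 0` of size `k` lies in `C(N-k, M-k)`
of them, and `C(N-k, M-k) / C(N-1, M-1) = C(M-1, k-1) / C(N-1, k-1)`.
-/

open Finset

section ProductWeight

variable {ι β R : Type*} [Fintype ι] [DecidableEq ι] [Fintype β] [CommSemiring R] {w : ι → β → R}

theorem sum_prod_apply_eq_one (hw : ∀ i, ∑ b, w i b = 1) :
    ∑ x : ι → β, ∏ i, w i (x i) = 1 := by
  rw [← Fintype.prod_sum]
  simp [hw]

theorem sum_prod_apply_mul_ite_forall_eq [DecidableEq β] (hw : ∀ i, ∑ b, w i b = 1)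
    (s : Finset ι) (b : ι → β) :
    ∑ x : ι → β, (∏ i, w i (x i)) * (if ∀ i ∈ s, x i = b i then 1 else 0) =
      ∏ i ∈ s, w i (b i) := by
  have hfactor : ∀ i, ∑ c, w i c * (if i ∈ s → c = b i then 1 else 0) =
      if i ∈ s then w i (b i) else 1 := by
    intro i
    by_cases hi : i ∈ s <;> simp [hi, hw]
  calc ∑ x : ι → β, (∏ i, w i (x i)) * (if ∀ i ∈ s, x i = b i then 1 else 0)
      = ∑ x : ι → β, ∏ i, w i (x i) * (if i ∈ s → x i = b i then 1 else 0) := by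
        simp_rw [prod_mul_distrib, prod_boole, mem_univ, true_implies]
    _ = ∏ i ∈ s, w i (b i) := by
        rw [← Fintype.prod_sum (fun i c => w i c * if i ∈ s → c = b i then 1 else 0),
          Fintype.prod_congr _ _ hfactor, prod_ite_mem, univ_inter]

theorem sum_prod_apply_mul_mul_of_dependsOn (hw : ∀ i, ∑ b, w i b = 1) {s : Set ι}
    {F G : (ι → β) → R} (hF : DependsOn F s) (hG : DependsOn G sᶜ) :
    ∑ x, (∏ i, w i (x i)) * (F x * G x) =
      (∑ x, (∏ i, w i (x i)) * F x) * ∑ x, (∏ i, w i (x i)) * G x := by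
  classical
  -- exchanging the `sᶜ`-coordinates of two independent samples preserves their joint weight
  let swap (xy : (ι → β) × (ι → β)) := (s.piecewise xy.1 xy.2, s.piecewise xy.2 xy.1)
  have hswap : Function.Involutive swap := by
    intro xy; ext i <;> by_cases hi : i ∈ s <;> simp [swap, hi]
  have hweight : ∀ xy, (∏ i, w i ((swap xy).1 i)) * ∏ i, w i ((swap xy).2 i) =
      (∏ i, w i (xy.1 i)) * ∏ i, w i (xy.2 i) := by
    intro xy
    simp only [← prod_mul_distrib]
    refine Fintype.prod_congr _ _ fun i => ?_
    by_cases hi : i ∈ s <;> simp [swap, hi, mul_comm]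
  have hFswap : ∀ xy, F (swap xy).1 = F xy.1 := fun xy => hF fun i hi => by simp [swap, hi]
  have hGswap : ∀ xy, G (swap xy).2 = G xy.1 := fun xy => hG fun i hi => by
    simp [swap, Set.piecewise_eq_of_notMem s _ _ hi]
  calc ∑ x, (∏ i, w i (x i)) * (F x * G x)
      = ∑ x, ∑ y : ι → β, (∏ i, w i (x i)) * (F x * G x) * ∏ i, w i (y i) := by
        rw [← sum_mul_sum, sum_prod_apply_eq_one hw, mul_one]
    _ = ∑ xy, (∏ i, w i ((swap xy).1 i)) * F (swap xy).1 *
          ((∏ i, w i ((swap xy).2 i)) * G (swap xy).2) := by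
        rw [← Fintype.sum_prod_type']
        refine Fintype.sum_congr _ _ fun xy => ?_
        rw [hFswap, hGswap]
        trans (∏ i, w i ((swap xy).1 i)) * (∏ i, w i ((swap xy).2 i)) * (F xy.1 * G xy.1)
        · rw [hweight]; ring
        · ring
    _ = ∑ xy : (ι → β) × (ι → β), (∏ i, w i (xy.1 i)) * F xy.1 * ((∏ i, w i (xy.2 i)) * G xy.2) :=
        Fintype.sum_equiv hswap.toPerm _ _ fun _ => rfl
    _ = _ := by rw [sum_mul_sum, Fintype.sum_prod_type]

end ProductWeight

section SubsetCounting

variable {α M : Type*} [DecidableEq α] [AddCommMonoid M]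

theorem sum_powerset_filter_mem_eq_sum_Icc (a : α) (A : Finset α) (f : Finset α → M) :
    ∑ S ∈ A.powerset with a ∈ S, f S =
      ∑ k ∈ Icc 1 #A, ∑ S ∈ A.powersetCard k with a ∈ S, f S := by
  have hcard : ∀ S ∈ A.powerset.filter (a ∈ ·), #S ∈ Icc 1 #A := fun S hS => by
    rw [mem_filter, mem_powerset] at hS
    exact mem_Icc.mpr ⟨card_pos.mpr ⟨a, hS.2⟩, card_le_card hS.1⟩
  rw [← sum_fiberwise_of_maps_to hcard]
  refine sum_congr rfl fun k _ => ?_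
  rw [powersetCard_eq_filter, filter_comm]

theorem sum_sum_powersetCard_filter_mem [Fintype α] (a : α) {k m : ℕ} (hkm : k ≤ m)
    (f : Finset α → M) :
    ∑ A ∈ univ.powersetCard m with a ∈ A, ∑ S ∈ A.powersetCard k with a ∈ S, f S =
      (Fintype.card α - k).choose (m - k) • ∑ S ∈ univ.powersetCard k with a ∈ S, f S := by
  rw [sum_comm' (t' := (univ.powersetCard k).filter (a ∈ ·))
    (s' := fun S => (univ.powersetCard m).filter (S ⊆ ·)), smul_sum]
  · refine sum_congr rfl fun S hS => ?_
    have hSk : #S = k := (mem_powersetCard.mp (mem_filter.mp hS).1).2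
    rw [sum_const, card_filter_powersetCard_subset S univ m (subset_univ S) (hSk ▸ hkm), hSk,
      card_univ]
  · intro A S
    simp only [mem_filter, mem_powersetCard, subset_univ, true_and]
    constructor
    · rintro ⟨⟨hA, -⟩, ⟨hSA, hS⟩, haS⟩
      exact ⟨⟨hA, hSA⟩, hS, haS⟩
    · rintro ⟨⟨hA, hSA⟩, hS, haS⟩
      exact ⟨⟨hA, hSA haS⟩, ⟨hSA, hS⟩, haS⟩

end SubsetCounting

section BernoulliGraph

variable {N : ℕ}

noncomputable def edgeWeight (p : ℝ) (c : Fin N × Fin N) (b : Bool) : ℝ :=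
  if c.1 = c.2 then (if b then 0 else 1) else (if b then p else 1 - p)

theorem sum_edgeWeight (p : ℝ) (c : Fin N × Fin N) : ∑ b, edgeWeight p c b = 1 := by
  unfold edgeWeight
  split_ifs <;> simp

theorem bernProb_eq_sum_uncurry (p : ℝ) (E : Set (Fin N → Fin N → Bool)) :
    bernProb N p E = ∑ x : Fin N × Fin N → Bool,
      (∏ c, edgeWeight p c (x c)) * (if Function.curry x ∈ E then 1 else 0) := by
  rw [bernProb, tsum_fintype, ← (Equiv.curry _ _ _).sum_comp]
  refine Fintype.sum_congr _ _ fun x => ?_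
  rw [Set.indicator_apply, mul_ite, mul_one, mul_zero, bernWeight, ← Fintype.prod_prod_type']
  rfl

theorem bernProb_biUnion {ι : Type*} (p : ℝ) (T : Finset ι) (E : ι → Set (Fin N → Fin N → Bool))
    (hE : (T : Set ι).PairwiseDisjoint E) :
    bernProb N p (⋃ i ∈ T, E i) = ∑ i ∈ T, bernProb N p (E i) := by
  simp only [bernProb, tsum_fintype, indicator_biUnion_apply T E hE]
  exact sum_comm

def edgelessOn (D : Finset (Fin N × Fin N)) : Set (Fin N → Fin N → Bool) :=
  {g | ∀ c ∈ D, g c.1 c.2 = false}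

theorem bernProb_edgelessOn (p : ℝ) {D : Finset (Fin N × Fin N)} (hD : ∀ c ∈ D, c.1 ≠ c.2) :
    bernProb N p (edgelessOn D) = (1 - p) ^ D.card := by
  have hfalse : ∀ c ∈ D, edgeWeight p c false = 1 - p := fun c hc => by
    simp [edgeWeight, hD c hc]
  calc bernProb N p (edgelessOn D)
      = ∑ x : Fin N × Fin N → Bool,
          (∏ c, edgeWeight p c (x c)) * (if ∀ c ∈ D, x c = false then 1 else 0) := by
        rw [bernProb_eq_sum_uncurry]
        simp [edgelessOn]
    _ = (1 - p) ^ D.card := by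
        rw [sum_prod_apply_mul_ite_forall_eq (sum_edgeWeight p) D fun _ => false,
          prod_congr rfl hfalse, prod_const]

theorem bernProb_inter_edgelessOn (p : ℝ) {D : Finset (Fin N × Fin N)} (hD : ∀ c ∈ D, c.1 ≠ c.2)
    {E : Set (Fin N → Fin N → Bool)}
    (hE : ∀ ⦃g g'⦄, (∀ c ∉ D, g c.1 c.2 = g' c.1 c.2) → g ∈ E → g' ∈ E) :
    bernProb N p (E ∩ edgelessOn D) = bernProb N p E * (1 - p) ^ D.card := by
  have hEdep : DependsOn (fun x : Fin N × Fin N → Bool =>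
      if Function.curry x ∈ E then (1 : ℝ) else 0) (↑D)ᶜ := fun x y hxy => by
    have hE' : Function.curry x ∈ E ↔ Function.curry y ∈ E :=
      ⟨hE fun c hc => hxy c hc, hE fun c hc => (hxy c hc).symm⟩
    simp only [hE']
  have hDdep : DependsOn (fun x : Fin N × Fin N → Bool =>
      if Function.curry x ∈ edgelessOn D then (1 : ℝ) else 0) ↑D := fun x y hxy => by
    have hD' : Function.curry x ∈ edgelessOn D ↔ Function.curry y ∈ edgelessOn D := by
      simp only [edgelessOn, Set.mem_ofPred_eq, Function.curry_apply]
      exact forall₂_congr fun c hc => by rw [hxy c hc]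
    simp only [hD']
  rw [← bernProb_edgelessOn p hD]
  simp only [bernProb_eq_sum_uncurry]
  rw [← sum_prod_apply_mul_mul_of_dependsOn (sum_edgeWeight p) hEdep (by simpa using hDdep)]
  simp only [Set.mem_inter_iff, ite_zero_mul_ite_zero, mul_one]

end BernoulliGraph

section OutComponent

variable {N : ℕ} (hN : 0 < N)

theorem zero_mem_bernOutComp (g : Fin N → Fin N → Bool) : ⟨0, hN⟩ ∈ bernOutComp N hN g :=
  Relation.ReflTransGen.refl

theorem bernOutComp_subset {g : Fin N → Fin N → Bool} {A : Set (Fin N)} (h0 : ⟨0, hN⟩ ∈ A)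
    (hA : ∀ u ∈ A, ∀ v, g u v = true → v ∈ A) : bernOutComp N hN g ⊆ A := by
  intro v hv
  induction hv with
  | refl => exact h0
  | tail _ huv hu => exact hA _ hu _ huv

theorem bernOutComp_congr {g g' : Fin N → Fin N → Bool}
    (h : ∀ u ∈ bernOutComp N hN g, ∀ v, g u v = g' u v) :
    bernOutComp N hN g' = bernOutComp N hN g := by
  refine (bernOutComp_subset hN (zero_mem_bernOutComp hN g) fun u hu v huv => ?_).antisymm
    fun v hv => ?_
  · exact Relation.ReflTransGen.tail hu ((h u hu v).trans huv)
  · induction hv with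
    | refl => exact zero_mem_bernOutComp hN g'
    | tail hu huv ih => exact Relation.ReflTransGen.tail ih ((h _ hu _).symm.trans huv)

noncomputable def bernCompProb (p : ℝ) (S : Finset (Fin N)) : ℝ :=
  bernProb N p {g | bernOutComp N hN g = S}

theorem pairwiseDisjoint_bernOutComp_eq (T : Set (Finset (Fin N))) :
    T.PairwiseDisjoint fun S : Finset (Fin N) => {g | bernOutComp N hN g = S} := by
  intro S _ S' _ hSS'
  refine Set.disjoint_left.mpr fun g hS hS' => hSS' ?_
  exact_mod_cast hS.symm.trans hS'

theorem bernQProb_eq_sum_bernCompProb (p : ℝ) (k : ℕ) :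
    bernQProb N hN p k =
      ∑ S ∈ univ.powersetCard k with ⟨0, hN⟩ ∈ S, bernCompProb hN p S := by
  have hunion : {g | (bernOutComp N hN g).ncard = k} =
      ⋃ S ∈ ((univ : Finset (Fin N)).powersetCard k).filter (⟨0, hN⟩ ∈ ·),
        {g | bernOutComp N hN g = S} := by
    ext g
    simp only [Set.mem_ofPred_eq, Set.mem_iUnion, mem_filter,
      mem_powersetCard_univ, exists_prop]
    constructor
    · intro hk
      exact ⟨(bernOutComp N hN g).toFinset, ⟨by rw [← Set.ncard_eq_toFinset_card', hk],
        Set.mem_toFinset.mpr (zero_mem_bernOutComp hN g)⟩, (Set.coe_toFinset _).symm⟩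
    · rintro ⟨S, ⟨hS, -⟩, hg⟩
      rw [hg, Set.ncard_coe_finset, hS]
  rw [bernQProb, hunion, bernProb_biUnion _ _ _ (pairwiseDisjoint_bernOutComp_eq hN _)]
  rfl

theorem edgelessOn_product_compl_eq_biUnion {A : Finset (Fin N)} (hA : ⟨0, hN⟩ ∈ A) :
    edgelessOn (A ×ˢ Aᶜ) = ⋃ S ∈ A.powerset.filter (⟨0, hN⟩ ∈ ·),
      {g | bernOutComp N hN g = S} ∩ edgelessOn ((A \ S) ×ˢ Aᶜ) := by
  ext g
  simp only [edgelessOn, Set.mem_ofPred_eq, Set.mem_iUnion, Set.mem_inter_iff, mem_filter,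
    mem_powerset, mem_product, mem_sdiff, mem_compl, exists_prop,
    Prod.forall]
  constructor
  · intro hg
    have hsub : bernOutComp N hN g ⊆ A := bernOutComp_subset hN hA fun u hu v huv => by
      by_contra hv
      simp [hg u v ⟨hu, hv⟩] at huv
    refine ⟨(bernOutComp N hN g).toFinset, ⟨?_, ?_⟩, (Set.coe_toFinset _).symm, ?_⟩
    · exact fun u hu => hsub (Set.mem_toFinset.mp hu)
    · exact Set.mem_toFinset.mpr (zero_mem_bernOutComp hN g)
    · exact fun u v huv => hg u v ⟨huv.1.1, huv.2⟩
  · rintro ⟨S, ⟨hSA, -⟩, hC, hS⟩ u v ⟨hu, hv⟩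
    by_cases huS : u ∈ S
    · by_contra huv
      have huC : u ∈ bernOutComp N hN g := by rw [hC]; exact huS
      have hvC : v ∈ bernOutComp N hN g := Relation.ReflTransGen.tail huC (by simpa using huv)
      rw [hC] at hvC
      exact hv (hSA hvC)
    · exact hS u v ⟨⟨hu, huS⟩, hv⟩

theorem pow_eq_sum_bernCompProb (p : ℝ) {A : Finset (Fin N)} (hA : ⟨0, hN⟩ ∈ A) :
    (1 - p) ^ (A.card * (N - A.card)) = ∑ S ∈ A.powerset with ⟨0, hN⟩ ∈ S,
      bernCompProb hN p S * (1 - p) ^ ((A.card - S.card) * (N - A.card)) := by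
  have hoff : ∀ B ⊆ A, ∀ c ∈ B ×ˢ Aᶜ, c.1 ≠ c.2 := fun B hB c hc heq => by
    rw [mem_product, mem_compl, ← heq] at hc
    exact hc.2 (hB hc.1)
  have hcard : ∀ B : Finset (Fin N), (B ×ˢ Aᶜ).card = B.card * (N - A.card) := fun B => by
    rw [card_product, card_compl, Fintype.card_fin]
  rw [← hcard, ← bernProb_edgelessOn p (hoff A subset_rfl),
    edgelessOn_product_compl_eq_biUnion hN hA, bernProb_biUnion _ _ _
      ((pairwiseDisjoint_bernOutComp_eq hN _).mono fun S => Set.inter_subset_left)]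
  refine sum_congr rfl fun S hS => ?_
  have hSA : S ⊆ A := mem_powerset.mp (mem_filter.mp hS).1
  rw [bernProb_inter_edgelessOn p (hoff _ sdiff_subset), hcard,
    card_sdiff_of_subset hSA]
  · rfl
  · intro g g' hgg' hg
    rw [Set.mem_ofPred_eq, bernOutComp_congr hN fun u hu v => hgg' (u, v) ?_]
    · exact hg
    · rw [Set.mem_ofPred_eq.mp hg] at hu
      simp [mem_coe.mp hu]

end OutComponent

theorem choose_mul_pow_eq_sum_bernQProb {N : ℕ} (hN : 0 < N) (p : ℝ) {M : ℕ} (hM1 : 1 ≤ M) :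
    ((N - 1).choose (M - 1) : ℝ) * (1 - p) ^ (M * (N - M)) =
      ∑ k ∈ Icc 1 M,
        ((N - k).choose (M - k) : ℝ) * bernQProb N hN p k * (1 - p) ^ ((M - k) * (N - M)) := by
  set z : Fin N := ⟨0, hN⟩
  set 𝒜 := (univ.powersetCard M).filter (z ∈ ·)
  have hcard𝒜 : #𝒜 = (N - 1).choose (M - 1) := by
    simpa using card_filter_powersetCard_subset {z} univ M (subset_univ _) (by simpa using hM1)
  have hperA : ∀ A ∈ 𝒜, (1 - p) ^ (M * (N - M)) = ∑ k ∈ Icc 1 M,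
      (1 - p) ^ ((M - k) * (N - M)) * ∑ S ∈ A.powersetCard k with z ∈ S, bernCompProb hN p S := by
    intro A hA
    obtain ⟨hAM, hzA⟩ : #A = M ∧ z ∈ A := by simpa [𝒜] using hA
    rw [← hAM, pow_eq_sum_bernCompProb hN p hzA, sum_powerset_filter_mem_eq_sum_Icc]
    refine sum_congr rfl fun k _ => ?_
    rw [mul_sum]
    refine sum_congr rfl fun S hS => ?_
    rw [(mem_powersetCard.mp (mem_filter.mp hS).1).2, mul_comm]
  calc ((N - 1).choose (M - 1) : ℝ) * (1 - p) ^ (M * (N - M))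
      = ∑ A ∈ 𝒜, (1 - p) ^ (M * (N - M)) := by rw [sum_const, hcard𝒜, nsmul_eq_mul]
    _ = ∑ k ∈ Icc 1 M, (1 - p) ^ ((M - k) * (N - M)) *
          ∑ A ∈ 𝒜, ∑ S ∈ A.powersetCard k with z ∈ S, bernCompProb hN p S := by
        simp_rw [sum_congr rfl hperA, mul_sum]
        exact sum_comm
    _ = _ := sum_congr rfl fun k hk => by
        rw [sum_sum_powersetCard_filter_mem z (mem_Icc.mp hk).2, bernQProb_eq_sum_bernCompProb,
          nsmul_eq_mul, Fintype.card_fin]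
        ring

theorem choose_mul_div_choose {N M k : ℕ} (hk1 : 1 ≤ k) (hkM : k ≤ M) (hMN : M ≤ N) :
    ((N - 1).choose (M - 1) : ℝ) * (((M - 1).choose (k - 1) : ℝ) / ((N - 1).choose (k - 1) : ℝ)) =
      (N - k).choose (M - k) := by
  have h := Nat.choose_mul (n := N - 1) (k := M - 1) (s := k - 1) (by omega)
  rw [show N - 1 - (k - 1) = N - k by omega, show M - 1 - (k - 1) = M - k by omega] at h
  have hpos : ((N - 1).choose (k - 1) : ℝ) ≠ 0 := by
    exact_mod_cast (Nat.choose_pos (by omega)).ne'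
  rw [← mul_div_assoc, div_eq_iff hpos]
  exact_mod_cast h.trans (mul_comm _ _)

theorem bernoulli_final_size_triangular_system
    (N : ℕ) (p : ℝ)
    (M : ℕ) (hM1 : 1 ≤ M) (hMN : M ≤ N) :
    (1 - p) ^ (M * (N - M)) =
      ∑ k ∈ Finset.Icc 1 M,
        bernQProb N (by omega) p k *
          (((M - 1).choose (k - 1) : ℝ) / ((N - 1).choose (k - 1) : ℝ)) *
          (1 - p) ^ ((M - k) * (N - M)) := by
  have hC : ((N - 1).choose (M - 1) : ℝ) ≠ 0 := by exact_mod_cast (Nat.choose_pos (by omega)).ne'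
  rw [← mul_right_inj' hC, choose_mul_pow_eq_sum_bernQProb (by omega) p hM1, mul_sum]
  refine sum_congr rfl fun k hk => ?_
  obtain ⟨hk1, hkM⟩ := mem_Icc.mp hk
  rw [← choose_mul_div_choose hk1 hkM hMN]
  ring
end

section
/- Let λ ≥ 0 be real and n ≥ 1 an integer. Draw L from the Poisson distribution with mean λ, then throw L balls independently and uniformly at random into n boxes. Then the number of boxes containing at least one ball has the binomial distribution with n trials and success probability 1 - e^{-λ/n}. -/
open scoped Classical

/-- The Poisson probability mass function with mean `lam`. -/
noncomputable def poissonPMF (lam : ℝ) (k : ℕ) : ℝ :=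
  Real.exp (-lam) * lam ^ k / (k.factorial : ℝ)

/-- The probability that throwing `L` balls independently and uniformly at random into
`n` boxes results in exactly `m` distinct nonempty boxes: the number of functions
`Fin L → Fin n` whose range has size `m`, divided by `n ^ L`. -/
noncomputable def distinctBoxesProb (n L m : ℕ) : ℝ :=
  ((Finset.univ.filter (fun f : Fin L → Fin n =>
      (Finset.univ.image f).card = m)).card : ℝ) / (n : ℝ) ^ L

/-!
Conditioning on the set `S` of occupied boxes, inclusion–exclusion over the boxes of `S` left
empty shows that exactly `∑ₖ (-1)ᵏ C(m, k) (m - k)^L` of the `n^L` throws of `L` balls occupy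
exactly `S`, where `m = #S`. The exponential generating function of this count is `(eˣ - 1)^m`, so
averaging over `L ~ Poisson(λ)` yields `C(n, m) e^{-λ} (e^{λ/n} - 1)^m`, which is
`C(n, m) (1 - e^{-λ/n})^m (e^{-λ/n})^{n-m}`: each box is empty independently with probability
`e^{-λ/n}`.
-/

open Finset

section Counting

variable {ι α : Type*} [Fintype ι] [DecidableEq ι] [Fintype α] [DecidableEq α]

theorem card_filter_image_subset (s : Finset α) :
    #{f : ι → α | univ.image f ⊆ s} = #s ^ Fintype.card ι := by
  have eq_piFinset : ({f : ι → α | univ.image f ⊆ s} : Finset _) =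
      Fintype.piFinset fun _ ↦ s := by
    ext f
    simp [image_subset_iff]
  simp [eq_piFinset]

/-- The inclusion–exclusion count of the surjections from an `L`-element set onto an `m`-element
set. -/
def surjectionCount (m L : ℕ) : ℤ :=
  ∑ k ∈ range (m + 1), (-1) ^ k * m.choose k * ((m - k : ℕ) : ℤ) ^ L

theorem card_filter_image_eq (s : Finset α) :
    #{f : ι → α | univ.image f = s} = surjectionCount #s (Fintype.card ι) := by
  let missing : α → Finset (ι → α) := fun a ↦ {f | a ∉ univ.image f}
  let inside : (ι → α) → ℤ := fun f ↦ if univ.image f ⊆ s then 1 else 0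
  have key := inclusion_exclusion_sum_inf_compl s missing inside
  have lhs : ∑ f ∈ s.inf fun a ↦ (missing a)ᶜ, inside f = #{f : ι → α | univ.image f = s} := by
    rw [sum_boole]
    congr 2
    ext f
    simp [missing, mem_inf, Subset.antisymm_iff, subset_iff, and_comm]
  have rhs : ∀ t ∈ s.powerset,
      ∑ f ∈ t.inf missing, inside f = ((#s - #t : ℕ) : ℤ) ^ Fintype.card ι := by
    intro t ht
    rw [← card_sdiff_of_subset (mem_powerset.1 ht), ← Nat.cast_pow, ← card_filter_image_subset,
      sum_boole]
    simp only [Nat.cast_inj]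
    congr 1
    ext f
    simp only [missing, mem_filter, mem_univ, true_and, mem_inf, mem_image, mem_sdiff,
      image_subset_iff, forall_and]
    grind
  rw [← lhs, key, sum_congr rfl fun t ht ↦ by rw [rhs t ht],
    sum_powerset_apply_card fun k ↦ (-1 : ℤ) ^ k • ((#s - k : ℕ) : ℤ) ^ Fintype.card ι,
    surjectionCount]
  refine sum_congr rfl fun k _ ↦ ?_
  simp only [nsmul_eq_mul, zsmul_eq_mul]
  push_cast
  ring

theorem card_filter_card_image_eq (m : ℕ) :
    (#{f : ι → α | #(univ.image f) = m} : ℤ) =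
      (Fintype.card α).choose m * surjectionCount m (Fintype.card ι) := by
  rw [card_eq_sum_card_fiberwise (f := fun f ↦ univ.image f) (t := powersetCard m univ)
    fun f hf ↦ mem_powersetCard_univ.2 (mem_filter.1 hf).2]
  have fiber : ∀ s ∈ powersetCard m (univ : Finset α),
      (#{f ∈ {f : ι → α | #(univ.image f) = m} | univ.image f = s} : ℤ) =
        surjectionCount m (Fintype.card ι) := by
    intro s hs
    rw [← mem_powersetCard_univ.1 hs, ← card_filter_image_eq, filter_filter]
    congr 3
    ext f
    simp only [and_iff_right_iff_imp]
    rintro rfl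
    rfl
  rw [Nat.cast_sum, sum_congr rfl fiber, sum_const, card_powersetCard, card_univ, nsmul_eq_mul]

end Counting

open Nat in
theorem hasSum_surjectionCount_mul_pow_div_factorial (m : ℕ) (x : ℝ) :
    HasSum (fun L ↦ (surjectionCount m L : ℝ) * x ^ L / L !) ((Real.exp x - 1) ^ m) := by
  have term : ∀ k ∈ range (m + 1),
      HasSum (fun L ↦ (-1) ^ k * m.choose k * (((m - k : ℕ) : ℝ) * x) ^ L / L !)
        ((-1) ^ k * Real.exp x ^ (m - k) * m.choose k) := by
    intro k _
    simp_rw [mul_div_assoc]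
    rw [mul_right_comm, ← Real.exp_nat_mul, Real.exp_eq_exp_ℝ]
    exact (NormedSpace.expSeries_div_hasSum_exp (((m - k : ℕ) : ℝ) * x)).mul_left _
  rw [sub_eq_neg_add, add_pow]
  refine (hasSum_sum term).congr_fun fun L ↦ ?_
  simp only [surjectionCount, Int.cast_sum, sum_mul, sum_div]
  push_cast
  exact sum_congr rfl fun k _ ↦ by ring

theorem poissonPMF_mul_distinctBoxesProb (lam : ℝ) (n L m : ℕ) :
    poissonPMF lam L * distinctBoxesProb n L m =
      n.choose m * Real.exp (-lam) * (surjectionCount m L * (lam / n) ^ L / L.factorial) := by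
  have count : (#{f : Fin L → Fin n | #(univ.image f) = m} : ℝ) =
      n.choose m * surjectionCount m L := by
    exact_mod_cast (card_filter_card_image_eq (ι := Fin L) (α := Fin n) m).trans
      (by rw [Fintype.card_fin, Fintype.card_fin])
  rw [poissonPMF, distinctBoxesProb, count]
  ring

theorem exp_neg_mul_exp_div_sub_one_pow (lam : ℝ) {n m : ℕ} (hn : n ≠ 0) (hmn : m ≤ n) :
    Real.exp (-lam) * (Real.exp (lam / n) - 1) ^ m =
      (1 - Real.exp (-lam / n)) ^ m * Real.exp (-lam / n) ^ (n - m) := by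
  set c := Real.exp (-lam / n)
  have exp_neg : Real.exp (-lam) = c ^ (n - m) * c ^ m := by
    rw [← pow_add, Nat.sub_add_cancel hmn, ← Real.exp_nat_mul]
    field_simp
  have exp_mul : Real.exp (lam / n) * c = 1 := by
    rw [← Real.exp_add, neg_div, add_neg_cancel, Real.exp_zero]
  rw [exp_neg, show 1 - c = c * (Real.exp (lam / n) - 1) by linear_combination -exp_mul, mul_pow]
  ring

theorem poisson_balls_occupied_boxes_binomial_general
    (lam : ℝ) (n : ℕ) (hn : 1 ≤ n) (m : ℕ) :
    ∑' L : ℕ, poissonPMF lam L * distinctBoxesProb n L m =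
      (n.choose m : ℝ) * (1 - Real.exp (-lam / n)) ^ m *
        (1 - (1 - Real.exp (-lam / n))) ^ (n - m) := by
  have hsum := (hasSum_surjectionCount_mul_pow_div_factorial m (lam / n)).mul_left
    (n.choose m * Real.exp (-lam))
  simp_rw [← poissonPMF_mul_distinctBoxesProb] at hsum
  rw [hsum.tsum_eq, sub_sub_cancel]
  rcases le_or_gt m n with hmn | hmn
  · rw [mul_assoc, exp_neg_mul_exp_div_sub_one_pow lam (by omega) hmn, mul_assoc]
  · simp [Nat.choose_eq_zero_of_lt hmn]

theorem poisson_balls_occupied_boxes_binomial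
    (lam : ℝ) (hlam : 0 ≤ lam) (n : ℕ) (hn : 1 ≤ n) (m : ℕ) :
    ∑' L : ℕ, poissonPMF lam L * distinctBoxesProb n L m =
      (n.choose m : ℝ) * (1 - Real.exp (-lam / n)) ^ m *
        (1 - (1 - Real.exp (-lam / n))) ^ (n - m) :=
  poisson_balls_occupied_boxes_binomial_general lam n hn m
end
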